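/- arXiv:math/0703236 — 5 statements merged into one kernel-verified Lean document; each statement's English description precedes it below -/
import Mathlib

section
/- The maximum modulus sup_{x} |r₁e^{i(t₁+λ₁x)} + r₂e^{i(t₂+λ₂x)} + r₃e^{i(t₃+λ₃x)}| is a strictly decreasing function of τ: if (t₁′,t₂′,t₃′) is another triple of real numbers with associated value τ′ and τ > τ′, then sup_x |r₁e^{i(t₁+λ₁x)}+r₂e^{i(t₂+λ₂x)}+r₃e^{i(t₃+λ₃x)}| < sup_x |r₁e^{i(t₁′+λ₁x)}+r₂e^{i(t₂′+λ₂x)}+r₃e^{i(t₃′+λ₃x)}|. In particular, min over all (t₁,t₂,t₃) of the maximum modulus equals sup_x |ε₁r₁e^{iλ₁x} + ε₂r₂e^{iλ₂x} + ε₃r₃e^{iλ₃x}|, where ε₁, ε₂, ε₃ ∈ {+1, −1} satisfy ε_iε_j = −1 for the permutation i, j, k of 1, 2, 3 such that the power of 2 in λ_i − λ_j is greater than the power of 2 in λ_i − λ_k and in λ_k − λ_j. -/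
open Real

/-- The trigonometric trinomial `x ↦ r₁ e^{i(u₁+λ₁x)} + r₂ e^{i(u₂+λ₂x)} + r₃ e^{i(u₃+λ₃x)}`. -/
noncomputable def trinomial (r₁ r₂ r₃ u₁ u₂ u₃ : ℝ) (l₁ l₂ l₃ : ℤ) (x : ℝ) : ℂ :=
  (r₁ : ℂ) * Complex.exp (Complex.I * ((u₁ + l₁ * x : ℝ) : ℂ)) +
  (r₂ : ℂ) * Complex.exp (Complex.I * ((u₂ + l₂ * x : ℝ) : ℂ)) +
  (r₃ : ℂ) * Complex.exp (Complex.I * ((u₃ + l₃ * x : ℝ) : ℂ))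

namespace Stmt3Aux

lemma re_rot (r u θ : ℝ) :
    (Complex.exp ((θ : ℂ) * Complex.I) * ((r : ℂ) * Complex.exp (Complex.I * (u : ℂ)))).re
      = r * Real.cos (u + θ) := by
  have h : Complex.exp ((θ:ℂ) * Complex.I) * ((r:ℂ) * Complex.exp (Complex.I * (u:ℂ)))
      = (r:ℂ) * Complex.exp (((u + θ : ℝ) : ℂ) * Complex.I) := by
    rw [show Complex.exp (↑θ * Complex.I) * ((r:ℂ) * Complex.exp (Complex.I * (u:ℂ)))
        = (r:ℂ) * Complex.exp ((u:ℂ) * Complex.I + (θ:ℂ) * Complex.I) by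
          rw [Complex.exp_add]; ring]
    push_cast
    ring_nf
  rw [h, Complex.re_ofReal_mul, Complex.exp_ofReal_mul_I_re]

lemma re_rot_tri (r₁ r₂ r₃ u₁ u₂ u₃ : ℝ) (l₁ l₂ l₃ : ℤ) (x θ : ℝ) :
    (Complex.exp ((θ : ℂ) * Complex.I) * trinomial r₁ r₂ r₃ u₁ u₂ u₃ l₁ l₂ l₃ x).re
      = r₁ * Real.cos (u₁ + l₁ * x + θ) + r₂ * Real.cos (u₂ + l₂ * x + θ)
        + r₃ * Real.cos (u₃ + l₃ * x + θ) := by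
  unfold trinomial
  rw [mul_add, mul_add, Complex.add_re, Complex.add_re, re_rot, re_rot, re_rot]

lemma tri_abs_le (r₁ r₂ r₃ : ℝ) (h₁ : 0 ≤ r₁) (h₂ : 0 ≤ r₂) (h₃ : 0 ≤ r₃)
    (u₁ u₂ u₃ : ℝ) (l₁ l₂ l₃ : ℤ) (x : ℝ) :
    Norm.norm (trinomial r₁ r₂ r₃ u₁ u₂ u₃ l₁ l₂ l₃ x) ≤ r₁ + r₂ + r₃ := by
  unfold trinomial
  have key : ∀ (r u : ℝ), 0 ≤ r → Norm.norm ((r:ℂ) * Complex.exp (Complex.I * (u:ℂ))) = r := by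
    intro r u hr
    rw [norm_mul, Complex.norm_exp]
    simp [abs_of_nonneg hr]
  calc Norm.norm _ ≤ Norm.norm ((r₁:ℂ) * Complex.exp (Complex.I * ((u₁ + l₁*x : ℝ):ℂ)))
        + Norm.norm ((r₂:ℂ) * Complex.exp (Complex.I * ((u₂ + l₂*x : ℝ):ℂ)))
        + Norm.norm ((r₃:ℂ) * Complex.exp (Complex.I * ((u₃ + l₃*x : ℝ):ℂ))) := by
        refine le_trans (norm_add_le _ _) ?_
        gcongr
        exact norm_add_le _ _
    _ = r₁ + r₂ + r₃ := by rw [key _ _ h₁, key _ _ h₂, key _ _ h₃]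

lemma tri_bdd (r₁ r₂ r₃ : ℝ) (h₁ : 0 ≤ r₁) (h₂ : 0 ≤ r₂) (h₃ : 0 ≤ r₃)
    (u₁ u₂ u₃ : ℝ) (l₁ l₂ l₃ : ℤ) :
    BddAbove (Set.range fun x => Norm.norm (trinomial r₁ r₂ r₃ u₁ u₂ u₃ l₁ l₂ l₃ x)) := by
  refine ⟨r₁ + r₂ + r₃, ?_⟩
  rintro y ⟨x, rfl⟩
  exact tri_abs_le r₁ r₂ r₃ h₁ h₂ h₃ u₁ u₂ u₃ l₁ l₂ l₃ x

lemma round_reduce (u : ℝ) : |u - 2*π*(round (u/(2*π)))| ≤ π := by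
  have hπ : (0:ℝ) < 2*π := by positivity
  have h := abs_sub_round (u/(2*π))
  have h2 : u - 2*π*(round (u/(2*π))) = (2*π) * (u/(2*π) - round (u/(2*π))) := by
    field_simp
  rw [h2, abs_mul, abs_of_pos hπ]
  nlinarith [pi_pos]



section Core

variable (r₁ r₂ r₃ : ℝ) (l₁ l₂ l₃ K₁ K₂ K₃ : ℤ)

/-- every value |f(x)| is a g-value with exact constraint -/
lemma exists_phi (hKl : (K₁:ℝ)*l₁ + K₂*l₂ + K₃*l₃ = 0) (hKs : (K₁:ℝ) + K₂ + K₃ = 0)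
    (u₁ u₂ u₃ x : ℝ) :
    ∃ φ₁ φ₂ φ₃ : ℝ, (K₁:ℝ)*φ₁ + K₂*φ₂ + K₃*φ₃ = (K₁:ℝ)*u₁ + K₂*u₂ + K₃*u₃ ∧
      Norm.norm (trinomial r₁ r₂ r₃ u₁ u₂ u₃ l₁ l₂ l₃ x)
        = r₁ * Real.cos φ₁ + r₂ * Real.cos φ₂ + r₃ * Real.cos φ₃ := by
  set f := trinomial r₁ r₂ r₃ u₁ u₂ u₃ l₁ l₂ l₃ x with hf
  set θ : ℝ := -(f.arg) with hθ
  refine ⟨u₁ + l₁*x + θ, u₂ + l₂*x + θ, u₃ + l₃*x + θ, by linear_combination x*hKl + θ*hKs, ?_⟩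
  rw [← re_rot_tri r₁ r₂ r₃ u₁ u₂ u₃ l₁ l₂ l₃ x θ, ← hf]
  have h1 : Complex.exp ((θ:ℂ) * Complex.I) * f = ((Norm.norm f : ℝ) : ℂ) := by
    have := Complex.norm_mul_exp_arg_mul_I f
    rw [hθ]
    push_cast
    rw [neg_mul, Complex.exp_neg]
    field_simp
    linear_combination -this
  rw [h1, Complex.ofReal_re]

/-- every g-value with the modular constraint is `≤` the sup -/
lemma gval_le_sup (hr₁ : 0 ≤ r₁) (hr₂ : 0 ≤ r₂) (hr₃ : 0 ≤ r₃)
    (h12 : l₁ ≠ l₂) (dR : ℝ) (hK1 : (K₁:ℝ) * dR = (l₂:ℝ) - l₃)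
    (hK2 : (K₂:ℝ) * dR = (l₃:ℝ) - l₁) (hK3 : (K₃:ℝ) * dR = (l₁:ℝ) - l₂)
    (m₁ m₂ m₃ : ℤ) (hm : K₁*m₁ + K₂*m₂ + K₃*m₃ = 1)
    (u₁ u₂ u₃ : ℝ) (φ₁ φ₂ φ₃ : ℝ) (n : ℤ)
    (hφ : (K₁:ℝ)*φ₁ + K₂*φ₂ + K₃*φ₃ = (K₁:ℝ)*u₁ + K₂*u₂ + K₃*u₃ + 2*π*n) :
    r₁ * Real.cos φ₁ + r₂ * Real.cos φ₂ + r₃ * Real.cos φ₃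
      ≤ ⨆ x : ℝ, Norm.norm (trinomial r₁ r₂ r₃ u₁ u₂ u₃ l₁ l₂ l₃ x) := by
  have hL : (l₂:ℝ) - l₁ ≠ 0 := by
    have h : (l₁:ℝ) ≠ (l₂:ℝ) := by
      intro hc; exact h12 (by exact_mod_cast hc)
    intro hc; apply h; linarith
  obtain ⟨χ₁, hχ₁⟩ : ∃ c : ℝ, c = φ₁ - u₁ - 2*π*n*m₁ := ⟨_, rfl⟩
  obtain ⟨χ₂, hχ₂⟩ : ∃ c : ℝ, c = φ₂ - u₂ - 2*π*n*m₂ := ⟨_, rfl⟩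
  obtain ⟨χ₃, hχ₃⟩ : ∃ c : ℝ, c = φ₃ - u₃ - 2*π*n*m₃ := ⟨_, rfl⟩
  have hmR : (K₁:ℝ)*m₁ + K₂*m₂ + K₃*m₃ = 1 := by exact_mod_cast hm
  have hcon : (K₁:ℝ)*χ₁ + K₂*χ₂ + K₃*χ₃ = 0 := by
    rw [hχ₁, hχ₂, hχ₃]; linear_combination hφ - 2*π*(n:ℝ)*hmR
  have h0 : ((l₂:ℝ)-l₃)*χ₁ + ((l₃:ℝ)-l₁)*χ₂ + ((l₁:ℝ)-l₂)*χ₃ = 0 := by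
    linear_combination dR * hcon - χ₁*hK1 - χ₂*hK2 - χ₃*hK3
  set x : ℝ := (χ₂ - χ₁)/((l₂:ℝ) - l₁) with hx
  set θ : ℝ := χ₁ - l₁ * x with hθ
  have e₁ : (l₁:ℝ)*x + θ = χ₁ := by rw [hθ]; ring
  have e₂ : (l₂:ℝ)*x + θ = χ₂ := by rw [hθ, hx]; field_simp; ring
  have e₃ : (l₃:ℝ)*x + θ = χ₃ := by
    rw [hθ, hx]; field_simp; linear_combination h0
  have c₁ : Real.cos (u₁ + l₁*x + θ) = Real.cos φ₁ := by
    have h : u₁ + (l₁:ℝ)*x + θ = φ₁ - (n*m₁ : ℤ)*(2*π) := by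
      rw [hχ₁] at e₁; push_cast; linarith [e₁]
    rw [h, Real.cos_sub_int_mul_two_pi]
  have c₂ : Real.cos (u₂ + l₂*x + θ) = Real.cos φ₂ := by
    have h : u₂ + (l₂:ℝ)*x + θ = φ₂ - (n*m₂ : ℤ)*(2*π) := by
      rw [hχ₂] at e₂; push_cast; linarith [e₂]
    rw [h, Real.cos_sub_int_mul_two_pi]
  have c₃ : Real.cos (u₃ + l₃*x + θ) = Real.cos φ₃ := by
    have h : u₃ + (l₃:ℝ)*x + θ = φ₃ - (n*m₃ : ℤ)*(2*π) := by
      rw [hχ₃] at e₃; push_cast; linarith [e₃]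
    rw [h, Real.cos_sub_int_mul_two_pi]
  have key : r₁ * Real.cos φ₁ + r₂ * Real.cos φ₂ + r₃ * Real.cos φ₃
      = (Complex.exp ((θ:ℂ) * Complex.I) * trinomial r₁ r₂ r₃ u₁ u₂ u₃ l₁ l₂ l₃ x).re := by
    rw [re_rot_tri, c₁, c₂, c₃]
  rw [key]
  have hb := tri_bdd r₁ r₂ r₃ hr₁ hr₂ hr₃ u₁ u₂ u₃ l₁ l₂ l₃
  calc (Complex.exp ((θ:ℂ) * Complex.I) * trinomial r₁ r₂ r₃ u₁ u₂ u₃ l₁ l₂ l₃ x).re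
      ≤ Norm.norm (Complex.exp ((θ:ℂ) * Complex.I) * trinomial r₁ r₂ r₃ u₁ u₂ u₃ l₁ l₂ l₃ x) :=
        Complex.re_le_norm _
    _ = Norm.norm (trinomial r₁ r₂ r₃ u₁ u₂ u₃ l₁ l₂ l₃ x) := by
        rw [norm_mul, Complex.norm_exp]; simp
    _ ≤ ⨆ x : ℝ, Norm.norm (trinomial r₁ r₂ r₃ u₁ u₂ u₃ l₁ l₂ l₃ x) := le_ciSup hb x

/-- the sup is attained at a point of the cube `[-π,π]³` satisfying the modular constraint -/
lemma exists_max (hr₁ : 0 ≤ r₁) (hr₂ : 0 ≤ r₂) (hr₃ : 0 ≤ r₃)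
    (h12 : l₁ ≠ l₂) (dR : ℝ) (hK1 : (K₁:ℝ) * dR = (l₂:ℝ) - l₃)
    (hK2 : (K₂:ℝ) * dR = (l₃:ℝ) - l₁) (hK3 : (K₃:ℝ) * dR = (l₁:ℝ) - l₂)
    (m₁ m₂ m₃ : ℤ) (hm : K₁*m₁ + K₂*m₂ + K₃*m₃ = 1)
    (hKl : (K₁:ℝ)*l₁ + K₂*l₂ + K₃*l₃ = 0) (hKs : (K₁:ℝ) + K₂ + K₃ = 0)
    (u₁ u₂ u₃ : ℝ) :
    ∃ (φ₁ φ₂ φ₃ : ℝ) (n : ℤ), |φ₁| ≤ π ∧ |φ₂| ≤ π ∧ |φ₃| ≤ π ∧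
      (K₁:ℝ)*φ₁ + K₂*φ₂ + K₃*φ₃ = (K₁:ℝ)*u₁ + K₂*u₂ + K₃*u₃ + 2*π*n ∧
      (⨆ x : ℝ, Norm.norm (trinomial r₁ r₂ r₃ u₁ u₂ u₃ l₁ l₂ l₃ x))
        = r₁ * Real.cos φ₁ + r₂ * Real.cos φ₂ + r₃ * Real.cos φ₃ := by
  obtain ⟨A, hA⟩ : ∃ c : ℝ, c = (K₁:ℝ)*u₁ + K₂*u₂ + K₃*u₃ := ⟨_, rfl⟩
  set C : Set (ℝ×ℝ×ℝ) :=
    (Set.Icc (-π) π ×ˢ Set.Icc (-π) π ×ˢ Set.Icc (-π) π) ∩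
      ((fun p : ℝ×ℝ×ℝ => Real.cos ((K₁:ℝ)*p.1 + K₂*p.2.1 + K₃*p.2.2 - A)) ⁻¹' {1}) with hCdef
  have hmemC : ∀ p : ℝ×ℝ×ℝ, p ∈ C ↔
      ((|p.1| ≤ π ∧ |p.2.1| ≤ π ∧ |p.2.2| ≤ π) ∧
        Real.cos ((K₁:ℝ)*p.1 + K₂*p.2.1 + K₃*p.2.2 - A) = 1) := by
    intro p
    rw [hCdef]
    simp [Set.mem_Icc, abs_le, Prod.le_def]
    tauto
  have hC : IsCompact C := by
    apply IsCompact.inter_right (isCompact_Icc.prod (isCompact_Icc.prod isCompact_Icc))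
    exact isClosed_singleton.preimage (by fun_prop)
  have hne : C.Nonempty := by
    refine ⟨⟨u₁ - 2*π*(round (u₁/(2*π))), u₂ - 2*π*(round (u₂/(2*π))),
      u₃ - 2*π*(round (u₃/(2*π)))⟩, (hmemC _).2 ⟨⟨round_reduce u₁, round_reduce u₂,
        round_reduce u₃⟩, ?_⟩⟩
    have h : (K₁:ℝ)*(u₁ - 2*π*(round (u₁/(2*π)))) + K₂*(u₂ - 2*π*(round (u₂/(2*π))))
        + K₃*(u₃ - 2*π*(round (u₃/(2*π)))) - A
        = ((-(K₁*(round (u₁/(2*π))) + K₂*(round (u₂/(2*π))) + K₃*(round (u₃/(2*π)))) : ℤ) : ℝ)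
            * (2*π) := by
      rw [hA]; push_cast; ring
    simp only [h]
    exact Real.cos_int_mul_two_pi _
  have hcont : Continuous (fun p : ℝ×ℝ×ℝ => r₁ * Real.cos p.1 + r₂ * Real.cos p.2.1
      + r₃ * Real.cos p.2.2) := by fun_prop
  obtain ⟨p, hpC, hmax⟩ := hC.exists_isMaxOn hne hcont.continuousOn
  obtain ⟨⟨hp1, hp2, hp3⟩, hpcos⟩ := (hmemC p).1 hpC
  obtain ⟨nn, hnn⟩ := (Real.cos_eq_one_iff _).1 hpcos
  refine ⟨p.1, p.2.1, p.2.2, nn, hp1, hp2, hp3, by rw [← hA]; linarith [hnn], ?_⟩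
  have hub : (⨆ x : ℝ, Norm.norm (trinomial r₁ r₂ r₃ u₁ u₂ u₃ l₁ l₂ l₃ x))
      ≤ r₁ * Real.cos p.1 + r₂ * Real.cos p.2.1 + r₃ * Real.cos p.2.2 := by
    apply ciSup_le
    intro x
    obtain ⟨φ₁, φ₂, φ₃, hφcon, hφval⟩ := exists_phi r₁ r₂ r₃ l₁ l₂ l₃ K₁ K₂ K₃ hKl hKs u₁ u₂ u₃ x
    obtain ⟨k₁, hk₁⟩ : ∃ k : ℤ, |φ₁ - 2*π*k| ≤ π := ⟨_, round_reduce φ₁⟩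
    obtain ⟨k₂, hk₂⟩ : ∃ k : ℤ, |φ₂ - 2*π*k| ≤ π := ⟨_, round_reduce φ₂⟩
    obtain ⟨k₃, hk₃⟩ : ∃ k : ℤ, |φ₃ - 2*π*k| ≤ π := ⟨_, round_reduce φ₃⟩
    have hmem : (⟨φ₁ - 2*π*k₁, φ₂ - 2*π*k₂, φ₃ - 2*π*k₃⟩ : ℝ×ℝ×ℝ) ∈ C := by
      refine (hmemC _).2 ⟨⟨hk₁, hk₂, hk₃⟩, ?_⟩
      have h : (K₁:ℝ)*(φ₁ - 2*π*k₁) + K₂*(φ₂ - 2*π*k₂) + K₃*(φ₃ - 2*π*k₃) - A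
          = ((-(K₁*k₁ + K₂*k₂ + K₃*k₃) : ℤ) : ℝ) * (2*π) := by
        rw [hA]; push_cast; linear_combination hφcon
      simp only [h]
      exact Real.cos_int_mul_two_pi _
    have hcos : ∀ (y : ℝ) (k : ℤ), Real.cos (y - 2*π*k) = Real.cos y := by
      intro y k
      have h : y - 2*π*k = y - k*(2*π) := by ring
      rw [h, Real.cos_sub_int_mul_two_pi]
    have := hmax hmem
    simp only [Set.mem_setOf_eq, hcos] at this
    rw [hφval]
    exact this
  have hlb := gval_le_sup r₁ r₂ r₃ l₁ l₂ l₃ K₁ K₂ K₃ hr₁ hr₂ hr₃ h12 dR hK1 hK2 hK3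
    m₁ m₂ m₃ hm u₁ u₂ u₃ p.1 p.2.1 p.2.2 nn (by rw [← hA]; linarith [hnn])
  linarith

lemma cos_scale {c φ : ℝ} (hc : |c| ≤ 1) (hφ : |φ| ≤ π) :
    Real.cos φ ≤ Real.cos (c*φ) := by
  have h1 : |c*φ| ≤ |φ| := by
    rw [abs_mul]
    nlinarith [abs_nonneg φ, abs_nonneg c]
  rw [← Real.cos_abs φ, ← Real.cos_abs (c*φ)]
  exact Real.cos_le_cos_of_nonneg_of_le_pi (abs_nonneg _) hφ h1

lemma cos_scale_lt {c φ : ℝ} (hc : |c| < 1) (hφ : |φ| ≤ π) (h0 : φ ≠ 0) :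
    Real.cos φ < Real.cos (c*φ) := by
  have h1 : |c*φ| < |φ| := by
    rw [abs_mul]
    have := abs_pos.2 h0
    nlinarith [abs_nonneg c]
  rw [← Real.cos_abs φ, ← Real.cos_abs (c*φ)]
  exact Real.cos_lt_cos_of_nonneg_of_le_pi (abs_nonneg _) hφ h1

lemma key_le (hr₁ : 0 < r₁) (hr₂ : 0 < r₂) (hr₃ : 0 < r₃)
    (h12 : l₁ ≠ l₂) (dR : ℝ) (hK1 : (K₁:ℝ) * dR = (l₂:ℝ) - l₃)
    (hK2 : (K₂:ℝ) * dR = (l₃:ℝ) - l₁) (hK3 : (K₃:ℝ) * dR = (l₁:ℝ) - l₂)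
    (m₁ m₂ m₃ : ℤ) (hm : K₁*m₁ + K₂*m₂ + K₃*m₃ = 1)
    (hKl : (K₁:ℝ)*l₁ + K₂*l₂ + K₃*l₃ = 0) (hKs : (K₁:ℝ) + K₂ + K₃ = 0)
    (u₁ u₂ u₃ u₁' u₂' u₃' τ τ' : ℝ)
    (hτlb : ∀ n : ℤ, τ ≤ |(K₁:ℝ)*u₁ + K₂*u₂ + K₃*u₃ - 2*π*n|)
    (hτ'mem : ∃ n : ℤ, τ' = |(K₁:ℝ)*u₁' + K₂*u₂' + K₃*u₃' - 2*π*n|)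
    (hτ'0 : 0 ≤ τ') (hle : τ' ≤ τ) :
    (⨆ x : ℝ, Norm.norm (trinomial r₁ r₂ r₃ u₁ u₂ u₃ l₁ l₂ l₃ x))
      ≤ ⨆ x : ℝ, Norm.norm (trinomial r₁ r₂ r₃ u₁' u₂' u₃' l₁ l₂ l₃ x) := by
  obtain ⟨φ₁, φ₂, φ₃, n₀, hφ1, hφ2, hφ3, hcon, hval⟩ :=
    exists_max r₁ r₂ r₃ l₁ l₂ l₃ K₁ K₂ K₃ hr₁.le hr₂.le hr₃.le h12 dR hK1 hK2 hK3
      m₁ m₂ m₃ hm hKl hKs u₁ u₂ u₃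
  obtain ⟨n', hn'⟩ := hτ'mem
  obtain ⟨B, hB⟩ : ∃ c : ℝ, c = (K₁:ℝ)*φ₁ + K₂*φ₂ + K₃*φ₃ := ⟨_, rfl⟩
  have hτB : τ ≤ |B| := by
    have h := hτlb (-n₀)
    have h2 : (K₁:ℝ)*u₁ + K₂*u₂ + K₃*u₃ - 2*π*(-n₀ : ℤ) = B := by
      rw [hB, hcon]; push_cast; ring
    rwa [h2] at h
  obtain ⟨T', hT'⟩ : ∃ c : ℝ, c = (K₁:ℝ)*u₁' + K₂*u₂' + K₃*u₃' - 2*π*n' := ⟨_, rfl⟩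
  have hT'abs : |T'| = τ' := by rw [hT', hn']
  obtain ⟨c, hc1, hc2⟩ : ∃ c : ℝ, |c| ≤ 1 ∧ c * B = T' := by
    by_cases hB0 : B = 0
    · refine ⟨0, by norm_num, ?_⟩
      have : |T'| = 0 := by
        rw [hT'abs]
        have := hτB
        rw [hB0] at this
        simp only [abs_zero] at this
        linarith
      rw [abs_eq_zero] at this
      rw [this, hB0]; ring
    · refine ⟨T'/B, ?_, by field_simp⟩
      rw [abs_div, div_le_one (abs_pos.2 hB0)]
      rw [hT'abs]; linarith
  have hg : r₁ * Real.cos φ₁ + r₂ * Real.cos φ₂ + r₃ * Real.cos φ₃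
      ≤ r₁ * Real.cos (c*φ₁) + r₂ * Real.cos (c*φ₂) + r₃ * Real.cos (c*φ₃) := by
    have g1 := cos_scale hc1 hφ1
    have g2 := cos_scale hc1 hφ2
    have g3 := cos_scale hc1 hφ3
    have := mul_le_mul_of_nonneg_left g1 hr₁.le
    have := mul_le_mul_of_nonneg_left g2 hr₂.le
    have := mul_le_mul_of_nonneg_left g3 hr₃.le
    linarith
  have hup : r₁ * Real.cos (c*φ₁) + r₂ * Real.cos (c*φ₂) + r₃ * Real.cos (c*φ₃)
      ≤ ⨆ x : ℝ, Norm.norm (trinomial r₁ r₂ r₃ u₁' u₂' u₃' l₁ l₂ l₃ x) := by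
    apply gval_le_sup r₁ r₂ r₃ l₁ l₂ l₃ K₁ K₂ K₃ hr₁.le hr₂.le hr₃.le h12 dR hK1 hK2 hK3
      m₁ m₂ m₃ hm u₁' u₂' u₃' _ _ _ (-n')
    have : (K₁:ℝ)*(c*φ₁) + K₂*(c*φ₂) + K₃*(c*φ₃) = c * B := by rw [hB]; ring
    rw [this, hc2, hT']
    push_cast; ring
  rw [hval]
  linarith

lemma key_lt (hr₁ : 0 < r₁) (hr₂ : 0 < r₂) (hr₃ : 0 < r₃)
    (h12 : l₁ ≠ l₂) (dR : ℝ) (hK1 : (K₁:ℝ) * dR = (l₂:ℝ) - l₃)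
    (hK2 : (K₂:ℝ) * dR = (l₃:ℝ) - l₁) (hK3 : (K₃:ℝ) * dR = (l₁:ℝ) - l₂)
    (m₁ m₂ m₃ : ℤ) (hm : K₁*m₁ + K₂*m₂ + K₃*m₃ = 1)
    (hKl : (K₁:ℝ)*l₁ + K₂*l₂ + K₃*l₃ = 0) (hKs : (K₁:ℝ) + K₂ + K₃ = 0)
    (u₁ u₂ u₃ u₁' u₂' u₃' τ τ' : ℝ)
    (hτlb : ∀ n : ℤ, τ ≤ |(K₁:ℝ)*u₁ + K₂*u₂ + K₃*u₃ - 2*π*n|)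
    (hτ'mem : ∃ n : ℤ, τ' = |(K₁:ℝ)*u₁' + K₂*u₂' + K₃*u₃' - 2*π*n|)
    (hτ'0 : 0 ≤ τ') (hlt : τ' < τ) :
    (⨆ x : ℝ, Norm.norm (trinomial r₁ r₂ r₃ u₁ u₂ u₃ l₁ l₂ l₃ x))
      < ⨆ x : ℝ, Norm.norm (trinomial r₁ r₂ r₃ u₁' u₂' u₃' l₁ l₂ l₃ x) := by
  obtain ⟨φ₁, φ₂, φ₃, n₀, hφ1, hφ2, hφ3, hcon, hval⟩ :=
    exists_max r₁ r₂ r₃ l₁ l₂ l₃ K₁ K₂ K₃ hr₁.le hr₂.le hr₃.le h12 dR hK1 hK2 hK3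
      m₁ m₂ m₃ hm hKl hKs u₁ u₂ u₃
  obtain ⟨n', hn'⟩ := hτ'mem
  obtain ⟨B, hB⟩ : ∃ c : ℝ, c = (K₁:ℝ)*φ₁ + K₂*φ₂ + K₃*φ₃ := ⟨_, rfl⟩
  have hτB : τ ≤ |B| := by
    have h := hτlb (-n₀)
    have h2 : (K₁:ℝ)*u₁ + K₂*u₂ + K₃*u₃ - 2*π*(-n₀ : ℤ) = B := by
      rw [hB, hcon]; push_cast; ring
    rwa [h2] at h
  have hB0 : B ≠ 0 := by
    intro h
    rw [h] at hτB
    simp only [abs_zero] at hτB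
    linarith
  obtain ⟨T', hT'⟩ : ∃ c : ℝ, c = (K₁:ℝ)*u₁' + K₂*u₂' + K₃*u₃' - 2*π*n' := ⟨_, rfl⟩
  have hT'abs : |T'| = τ' := by rw [hT', hn']
  obtain ⟨c, hcdef⟩ : ∃ c : ℝ, c = T'/B := ⟨_, rfl⟩
  have hc1 : |c| < 1 := by
    rw [hcdef, abs_div, div_lt_one (abs_pos.2 hB0), hT'abs]
    linarith
  have hc2 : c * B = T' := by rw [hcdef]; field_simp
  have hφne : φ₁ ≠ 0 ∨ φ₂ ≠ 0 ∨ φ₃ ≠ 0 := by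
    by_contra h
    push_neg at h
    obtain ⟨e1, e2, e3⟩ := h
    apply hB0
    rw [hB, e1, e2, e3]; ring
  have hg : r₁ * Real.cos φ₁ + r₂ * Real.cos φ₂ + r₃ * Real.cos φ₃
      < r₁ * Real.cos (c*φ₁) + r₂ * Real.cos (c*φ₂) + r₃ * Real.cos (c*φ₃) := by
    have g1 := cos_scale hc1.le hφ1
    have g2 := cos_scale hc1.le hφ2
    have g3 := cos_scale hc1.le hφ3
    rcases hφne with h | h | h
    · have s1 := mul_lt_mul_of_pos_left (cos_scale_lt hc1 hφ1 h) hr₁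
      have t2 := mul_le_mul_of_nonneg_left g2 hr₂.le
      have t3 := mul_le_mul_of_nonneg_left g3 hr₃.le
      linarith
    · have s2 := mul_lt_mul_of_pos_left (cos_scale_lt hc1 hφ2 h) hr₂
      have t1 := mul_le_mul_of_nonneg_left g1 hr₁.le
      have t3 := mul_le_mul_of_nonneg_left g3 hr₃.le
      linarith
    · have s3 := mul_lt_mul_of_pos_left (cos_scale_lt hc1 hφ3 h) hr₃
      have t1 := mul_le_mul_of_nonneg_left g1 hr₁.le
      have t2 := mul_le_mul_of_nonneg_left g2 hr₂.le
      linarith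
  have hup : r₁ * Real.cos (c*φ₁) + r₂ * Real.cos (c*φ₂) + r₃ * Real.cos (c*φ₃)
      ≤ ⨆ x : ℝ, Norm.norm (trinomial r₁ r₂ r₃ u₁' u₂' u₃' l₁ l₂ l₃ x) := by
    apply gval_le_sup r₁ r₂ r₃ l₁ l₂ l₃ K₁ K₂ K₃ hr₁.le hr₂.le hr₃.le h12 dR hK1 hK2 hK3
      m₁ m₂ m₃ hm u₁' u₂' u₃' _ _ _ (-n')
    have h : (K₁:ℝ)*(c*φ₁) + K₂*(c*φ₂) + K₃*(c*φ₃) = c * B := by rw [hB]; ring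
    rw [h, hc2, hT']
    push_cast; ring
  rw [hval]
  linarith

end Core

lemma pvi_neg (a : ℤ) : padicValInt 2 (-a) = padicValInt 2 a := by
  unfold padicValInt
  rw [Int.natAbs_neg]

lemma pvi_odd {a : ℤ} (h : ¬ (2:ℤ) ∣ a) : padicValInt 2 a = 0 := by
  unfold padicValInt
  apply padicValNat.eq_zero_of_not_dvd
  intro hc
  have h2 : (2:ℤ).natAbs ∣ a.natAbs := by simpa using hc
  exact h (Int.natAbs_dvd_natAbs.mp h2)

lemma gcd_pair_eq (a b c : ℤ) (h : a + b + c = 0) : Int.gcd a b = Int.gcd b c := by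
  apply Nat.dvd_antisymm
  · rw [← Int.natCast_dvd_natCast]
    exact Int.dvd_coe_gcd (Int.gcd_dvd_right _ _)
      (by have h1 := Int.gcd_dvd_left (a := a) (b := b)
          have h2 := Int.gcd_dvd_right (a := a) (b := b)
          have : c = -a - b := by linarith
          rw [this]
          exact dvd_sub h1.neg_right h2)
  · rw [← Int.natCast_dvd_natCast]
    exact Int.dvd_coe_gcd
      (by have h1 := Int.gcd_dvd_left (a := b) (b := c)
          have h2 := Int.gcd_dvd_right (a := b) (b := c)
          have : a = -b - c := by linarith
          rw [this]
          exact dvd_sub h1.neg_right h2)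
      (Int.gcd_dvd_left _ _)

lemma parity_case (D E : ℤ) (hD : D ≠ 0) (hE : E ≠ 0) (d : ℕ) (hd : d = Int.gcd D E)
    (hv : padicValInt 2 D > padicValInt 2 E) :
    (2:ℤ) ∣ (D / (d:ℤ)) ∧ ¬ (2:ℤ) ∣ (E / (d:ℤ)) := by
  have hdpos : 0 < Int.gcd D E := Int.gcd_pos_iff.2 (Or.inl hD)
  have hd0 : (d:ℤ) ≠ 0 := by
    rw [hd]; exact_mod_cast hdpos.ne'
  have hdvdD : (d:ℤ) ∣ D := by rw [hd]; exact Int.gcd_dvd_left _ _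
  have hdvdE : (d:ℤ) ∣ E := by rw [hd]; exact Int.gcd_dvd_right _ _
  have hPd : (D / (d:ℤ)) * d = D := Int.ediv_mul_cancel hdvdD
  have hQd : (E / (d:ℤ)) * d = E := Int.ediv_mul_cancel hdvdE
  have hP0 : D / (d:ℤ) ≠ 0 := by
    intro h; apply hD; rw [← hPd, h]; ring
  have hQ0 : E / (d:ℤ) ≠ 0 := by
    intro h; apply hE; rw [← hQd, h]; ring
  have hcop : Int.gcd (D / (d:ℤ)) (E / (d:ℤ)) = 1 := by
    have := Int.gcd_div_gcd_div_gcd (i := D) (j := E) hdpos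
    rwa [← hd] at this
  have hPeven : (2:ℤ) ∣ (D / (d:ℤ)) := by
    by_contra hodd
    have hv0 : padicValInt 2 (D / (d:ℤ)) = 0 := pvi_odd hodd
    have hvD : padicValInt 2 D = padicValInt 2 (d:ℤ) := by
      have h := padicValInt.mul (p := 2) hP0 hd0
      rw [hPd, hv0, zero_add] at h
      exact h
    have hvE : padicValInt 2 E = padicValInt 2 (E / (d:ℤ)) + padicValInt 2 (d:ℤ) := by
      have h := padicValInt.mul (p := 2) hQ0 hd0
      rw [hQd] at h
      exact h
    omega
  constructor
  · exact hPeven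
  · intro hQeven
    have : (2:ℤ) ∣ (Int.gcd (D / (d:ℤ)) (E / (d:ℤ)) : ℤ) := Int.dvd_coe_gcd hPeven hQeven
    rw [hcop] at this
    norm_num at this

lemma eps_term (ε r : ℝ) (hε : ε = 1 ∨ ε = -1) (l : ℤ) (x : ℝ) :
    ((ε * r : ℝ) : ℂ) * Complex.exp (Complex.I * ((l * x : ℝ) : ℂ))
      = (r : ℂ) * Complex.exp (Complex.I * (((if ε = 1 then (0:ℝ) else π) + l * x : ℝ) : ℂ)) := by
  rcases hε with h | h
  · rw [h, if_pos rfl]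
    norm_num
  · rw [h, if_neg (by norm_num)]
    have he : Complex.I * ((π + (l:ℝ) * x : ℝ) : ℂ)
        = (π:ℂ) * Complex.I + Complex.I * (((l:ℝ) * x : ℝ) : ℂ) := by push_cast; ring
    rw [he, Complex.exp_add, Complex.exp_pi_mul_I]
    push_cast; ring

end Stmt3Aux

theorem stmt3 (l₁ l₂ l₃ : ℤ) (h12 : l₁ ≠ l₂) (h13 : l₁ ≠ l₃) (h23 : l₂ ≠ l₃)
    (r₁ r₂ r₃ : ℝ) (hr₁ : 0 < r₁) (hr₂ : 0 < r₂) (hr₃ : 0 < r₃)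
    (d : ℕ) (hd : d = Int.gcd (l₂ - l₁) (l₃ - l₂))
    -- the maximum modulus as a function of the phases
    (M : ℝ → ℝ → ℝ → ℝ)
    (hM : ∀ u₁ u₂ u₃ : ℝ, M u₁ u₂ u₃
      = ⨆ x : ℝ, Norm.norm (trinomial r₁ r₂ r₃ u₁ u₂ u₃ l₁ l₂ l₃ x))
    -- τ as a function of the phases: distance of the phase combination to 2πℤ
    (τf : ℝ → ℝ → ℝ → ℝ)
    (hτf : ∀ u₁ u₂ u₃ : ℝ, IsLeast {s : ℝ | ∃ n : ℤ,
      s = |((l₂ - l₃ : ℤ) : ℝ) / d * u₁ + ((l₃ - l₁ : ℤ) : ℝ) / d * u₂ +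
        ((l₁ - l₂ : ℤ) : ℝ) / d * u₃ - 2 * π * n|} (τf u₁ u₂ u₃))
    -- the signs
    (ε₁ ε₂ ε₃ : ℝ) (hε₁ : ε₁ = 1 ∨ ε₁ = -1) (hε₂ : ε₂ = 1 ∨ ε₂ = -1)
    (hε₃ : ε₃ = 1 ∨ ε₃ = -1)
    -- `ε_i ε_j = -1` for the permutation `i, j, k` of `1, 2, 3` such that the power of 2
    -- in `λ_i - λ_j` is greater than the power of 2 in `λ_i - λ_k` and in `λ_k - λ_j`
    (hsign :
      (padicValInt 2 (l₁ - l₂) > padicValInt 2 (l₁ - l₃) ∧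
        padicValInt 2 (l₁ - l₂) > padicValInt 2 (l₃ - l₂) ∧ ε₁ * ε₂ = -1) ∨
      (padicValInt 2 (l₁ - l₃) > padicValInt 2 (l₁ - l₂) ∧
        padicValInt 2 (l₁ - l₃) > padicValInt 2 (l₂ - l₃) ∧ ε₁ * ε₃ = -1) ∨
      (padicValInt 2 (l₂ - l₃) > padicValInt 2 (l₂ - l₁) ∧
        padicValInt 2 (l₂ - l₃) > padicValInt 2 (l₁ - l₃) ∧ ε₂ * ε₃ = -1)) :
    -- the maximum modulus is a strictly decreasing function of τ
    (∀ t₁ t₂ t₃ t₁' t₂' t₃' : ℝ,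
      τf t₁' t₂' t₃' < τf t₁ t₂ t₃ → M t₁ t₂ t₃ < M t₁' t₂' t₃') ∧
    -- the minimum over all phases of the maximum modulus
    IsLeast {m : ℝ | ∃ u₁ u₂ u₃ : ℝ, m = M u₁ u₂ u₃}
      (⨆ x : ℝ, Norm.norm
        ((ε₁ * r₁ : ℝ) * Complex.exp (Complex.I * ((l₁ * x : ℝ) : ℂ)) +
         (ε₂ * r₂ : ℝ) * Complex.exp (Complex.I * ((l₂ * x : ℝ) : ℂ)) +
         (ε₃ * r₃ : ℝ) * Complex.exp (Complex.I * ((l₃ * x : ℝ) : ℂ)))) := by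
  classical
  have h12' : l₂ - l₁ ≠ 0 := sub_ne_zero.2 (Ne.symm h12)
  have hD1 : l₂ - l₃ ≠ 0 := sub_ne_zero.2 h23
  have hD2 : l₃ - l₁ ≠ 0 := sub_ne_zero.2 (Ne.symm h13)
  have hD3 : l₁ - l₂ ≠ 0 := sub_ne_zero.2 h12
  have hdpos : 0 < d := by rw [hd]; exact Int.gcd_pos_iff.2 (Or.inl h12')
  have hdZ : (d:ℤ) ≠ 0 := by exact_mod_cast hdpos.ne'
  have hdR : (d:ℝ) ≠ 0 := by
    have : (0:ℝ) < d := by exact_mod_cast hdpos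
    linarith
  have hdvd1 : (d:ℤ) ∣ (l₂ - l₃) := by
    rw [hd, show l₂ - l₃ = -(l₃ - l₂) by ring]
    exact (Int.gcd_dvd_right _ _).neg_right
  have hdvd2 : (d:ℤ) ∣ (l₃ - l₁) := by
    rw [hd, show l₃ - l₁ = (l₂ - l₁) + (l₃ - l₂) by ring]
    exact dvd_add (Int.gcd_dvd_left _ _) (Int.gcd_dvd_right _ _)
  have hdvd3 : (d:ℤ) ∣ (l₁ - l₂) := by
    rw [hd, show l₁ - l₂ = -(l₂ - l₁) by ring]
    exact (Int.gcd_dvd_left _ _).neg_right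
  obtain ⟨K₁, hK₁def⟩ : ∃ k : ℤ, k = (l₂ - l₃) / (d:ℤ) := ⟨_, rfl⟩
  obtain ⟨K₂, hK₂def⟩ : ∃ k : ℤ, k = (l₃ - l₁) / (d:ℤ) := ⟨_, rfl⟩
  obtain ⟨K₃, hK₃def⟩ : ∃ k : ℤ, k = (l₁ - l₂) / (d:ℤ) := ⟨_, rfl⟩
  have hK₁d : K₁ * d = l₂ - l₃ := by rw [hK₁def]; exact Int.ediv_mul_cancel hdvd1
  have hK₂d : K₂ * d = l₃ - l₁ := by rw [hK₂def]; exact Int.ediv_mul_cancel hdvd2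
  have hK₃d : K₃ * d = l₁ - l₂ := by rw [hK₃def]; exact Int.ediv_mul_cancel hdvd3
  have hK1R : (K₁:ℝ) * (d:ℝ) = (l₂:ℝ) - l₃ := by exact_mod_cast hK₁d
  have hK2R : (K₂:ℝ) * (d:ℝ) = (l₃:ℝ) - l₁ := by exact_mod_cast hK₂d
  have hK3R : (K₃:ℝ) * (d:ℝ) = (l₁:ℝ) - l₂ := by exact_mod_cast hK₃d
  have hKsumZ : K₁ + K₂ + K₃ = 0 := by
    have h : (K₁ + K₂ + K₃) * d = 0 := by linear_combination hK₁d + hK₂d + hK₃d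
    rcases mul_eq_zero.1 h with h | h
    · exact h
    · exact absurd h hdZ
  have hKlZ : K₁*l₁ + K₂*l₂ + K₃*l₃ = 0 := by
    have h : (K₁*l₁ + K₂*l₂ + K₃*l₃) * d = 0 := by
      linear_combination l₁*hK₁d + l₂*hK₂d + l₃*hK₃d
    rcases mul_eq_zero.1 h with h | h
    · exact h
    · exact absurd h hdZ
  have hKl : (K₁:ℝ)*l₁ + K₂*l₂ + K₃*l₃ = 0 := by exact_mod_cast hKlZ
  have hKs : (K₁:ℝ) + K₂ + K₃ = 0 := by exact_mod_cast hKsumZ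
  have hd31 : Int.gcd (l₁ - l₂) (l₂ - l₃) = d := by
    rw [hd, show l₁ - l₂ = -(l₂-l₁) by ring, show l₂ - l₃ = -(l₃-l₂) by ring,
      Int.neg_gcd, Int.gcd_neg]
  have hcop : Int.gcd K₃ K₁ = 1 := by
    have h := Int.gcd_div_gcd_div_gcd (i := l₁ - l₂) (j := l₂ - l₃) (by rw [hd31]; exact hdpos)
    rw [hd31] at h
    rw [hK₃def, hK₁def]
    exact h
  obtain ⟨a, b, hab⟩ := Int.isCoprime_iff_gcd_eq_one.2 hcop
  have hm : K₁*b + K₂*0 + K₃*a = 1 := by linear_combination hab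
  have e1 : ((l₂ - l₃ : ℤ) : ℝ) / (d:ℝ) = (K₁:ℝ) := by
    rw [div_eq_iff hdR]; push_cast; linarith [hK1R]
  have e2 : ((l₃ - l₁ : ℤ) : ℝ) / (d:ℝ) = (K₂:ℝ) := by
    rw [div_eq_iff hdR]; push_cast; linarith [hK2R]
  have e3 : ((l₁ - l₂ : ℤ) : ℝ) / (d:ℝ) = (K₃:ℝ) := by
    rw [div_eq_iff hdR]; push_cast; linarith [hK3R]
  simp only [e1, e2, e3] at hτf
  have τ0 : ∀ u₁ u₂ u₃ : ℝ, 0 ≤ τf u₁ u₂ u₃ := by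
    intro u₁ u₂ u₃
    obtain ⟨n, hn⟩ := (hτf u₁ u₂ u₃).1
    rw [hn]; exact abs_nonneg _
  have τlb : ∀ u₁ u₂ u₃ : ℝ, ∀ n : ℤ,
      τf u₁ u₂ u₃ ≤ |(K₁:ℝ)*u₁ + K₂*u₂ + K₃*u₃ - 2*π*n| :=
    fun u₁ u₂ u₃ n => (hτf u₁ u₂ u₃).2 ⟨n, rfl⟩
  have τπ : ∀ u₁ u₂ u₃ : ℝ, τf u₁ u₂ u₃ ≤ π := fun u₁ u₂ u₃ =>
    le_trans (τlb u₁ u₂ u₃ (round (((K₁:ℝ)*u₁ + K₂*u₂ + K₃*u₃)/(2*π))))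
      (Stmt3Aux.round_reduce _)
  constructor
  · intro t₁ t₂ t₃ t₁' t₂' t₃' hlt
    rw [hM t₁ t₂ t₃, hM t₁' t₂' t₃']
    exact Stmt3Aux.key_lt r₁ r₂ r₃ l₁ l₂ l₃ K₁ K₂ K₃ hr₁ hr₂ hr₃ h12 (d:ℝ)
      hK1R hK2R hK3R b 0 a hm hKl hKs t₁ t₂ t₃ t₁' t₂' t₃'
      (τf t₁ t₂ t₃) (τf t₁' t₂' t₃') (τlb t₁ t₂ t₃) (hτf t₁' t₂' t₃').1
      (τ0 t₁' t₂' t₃') hlt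
  · obtain ⟨θ₁, hθ₁def⟩ : ∃ c : ℝ, c = if ε₁ = 1 then (0:ℝ) else π := ⟨_, rfl⟩
    obtain ⟨θ₂, hθ₂def⟩ : ∃ c : ℝ, c = if ε₂ = 1 then (0:ℝ) else π := ⟨_, rfl⟩
    obtain ⟨θ₃, hθ₃def⟩ : ∃ c : ℝ, c = if ε₃ = 1 then (0:ℝ) else π := ⟨_, rfl⟩
    have htarget : (⨆ x : ℝ, Norm.norm
        ((ε₁ * r₁ : ℝ) * Complex.exp (Complex.I * ((l₁ * x : ℝ) : ℂ)) +
         (ε₂ * r₂ : ℝ) * Complex.exp (Complex.I * ((l₂ * x : ℝ) : ℂ)) +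
         (ε₃ * r₃ : ℝ) * Complex.exp (Complex.I * ((l₃ * x : ℝ) : ℂ))))
        = M θ₁ θ₂ θ₃ := by
      rw [hM θ₁ θ₂ θ₃]
      congr 1
      funext x
      unfold trinomial
      rw [hθ₁def, hθ₂def, hθ₃def,
        Stmt3Aux.eps_term ε₁ r₁ hε₁ l₁ x, Stmt3Aux.eps_term ε₂ r₂ hε₂ l₂ x,
        Stmt3Aux.eps_term ε₃ r₃ hε₃ l₃ x]
    obtain ⟨o, ho⟩ : ∃ o : ℤ,
        o = (if ε₁ = 1 then 0 else K₁) + (if ε₂ = 1 then 0 else K₂)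
          + (if ε₃ = 1 then 0 else K₃) := ⟨_, rfl⟩
    have hAθ : (K₁:ℝ)*θ₁ + K₂*θ₂ + K₃*θ₃ = π * (o:ℝ) := by
      rw [ho, hθ₁def, hθ₂def, hθ₃def]
      rcases hε₁ with h1|h1 <;> rcases hε₂ with h2|h2 <;> rcases hε₃ with h3|h3 <;>
        norm_num [h1, h2, h3] <;> push_cast <;> ring
    have hodd : ¬ (2:ℤ) ∣ o := by
      have g12 : Int.gcd (l₂ - l₃) (l₃ - l₁) = d := by
        rw [← Stmt3Aux.gcd_pair_eq (l₁-l₂) (l₂-l₃) (l₃-l₁) (by ring)]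
        exact hd31
      have g23 : Int.gcd (l₃ - l₁) (l₁ - l₂) = d := by
        rw [← Stmt3Aux.gcd_pair_eq (l₂-l₃) (l₃-l₁) (l₁-l₂) (by ring)]
        exact g12
      rcases hsign with ⟨hv1, hv2, hε⟩ | ⟨hv1, hv2, hε⟩ | ⟨hv1, hv2, hε⟩
      · -- 2 ∣ K₃, ¬ 2 ∣ K₁
        have hv : padicValInt 2 (l₁-l₂) > padicValInt 2 (l₂-l₃) := by
          rw [show l₂ - l₃ = -(l₃-l₂) by ring, Stmt3Aux.pvi_neg]; exact hv2
        obtain ⟨hP, hQ⟩ := Stmt3Aux.parity_case (l₁-l₂) (l₂-l₃) hD3 hD1 d hd31.symm hv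
        rw [← hK₃def] at hP
        rw [← hK₁def] at hQ
        rcases hε₁ with h1|h1 <;> rcases hε₂ with h2|h2 <;> rcases hε₃ with h3|h3 <;>
          subst h1 <;> subst h2 <;> subst h3 <;> rw [ho] <;> norm_num at hε <;> norm_num <;> omega
      · -- 2 ∣ K₂, ¬ 2 ∣ K₃
        have hv : padicValInt 2 (l₃-l₁) > padicValInt 2 (l₁-l₂) := by
          rw [show l₃ - l₁ = -(l₁-l₃) by ring, Stmt3Aux.pvi_neg]; exact hv1
        obtain ⟨hP, hQ⟩ := Stmt3Aux.parity_case (l₃-l₁) (l₁-l₂) hD2 hD3 d g23.symm hv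
        rw [← hK₂def] at hP
        rw [← hK₃def] at hQ
        rcases hε₁ with h1|h1 <;> rcases hε₂ with h2|h2 <;> rcases hε₃ with h3|h3 <;>
          subst h1 <;> subst h2 <;> subst h3 <;> rw [ho] <;> norm_num at hε <;> norm_num <;> omega
      · -- 2 ∣ K₁, ¬ 2 ∣ K₂
        have hv : padicValInt 2 (l₂-l₃) > padicValInt 2 (l₃-l₁) := by
          rw [show l₃ - l₁ = -(l₁-l₃) by ring, Stmt3Aux.pvi_neg]; exact hv2
        obtain ⟨hP, hQ⟩ := Stmt3Aux.parity_case (l₂-l₃) (l₃-l₁) hD1 hD2 d g12.symm hv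
        rw [← hK₁def] at hP
        rw [← hK₂def] at hQ
        rcases hε₁ with h1|h1 <;> rcases hε₂ with h2|h2 <;> rcases hε₃ with h3|h3 <;>
          subst h1 <;> subst h2 <;> subst h3 <;> rw [ho] <;> norm_num at hε <;> norm_num <;> omega
    have hlead : IsLeast {s : ℝ | ∃ n : ℤ,
        s = |(K₁:ℝ)*θ₁ + K₂*θ₂ + K₃*θ₃ - 2*π*n|} π := by
      constructor
      · refine ⟨(o-1)/2, ?_⟩
        have hoeq : (o:ℝ) = 2*(((o-1)/2 : ℤ):ℝ) + 1 := by
          have h : o = 2*((o-1)/2) + 1 := by omega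
          exact_mod_cast h
        rw [hAθ, hoeq, show π*(2*(((o-1)/2:ℤ):ℝ)+1) - 2*π*(((o-1)/2:ℤ):ℝ) = π by ring]
        exact (abs_of_pos pi_pos).symm
      · rintro s ⟨n, rfl⟩
        rw [hAθ, show π*(o:ℝ) - 2*π*(n:ℝ) = π * ((o - 2*n : ℤ):ℝ) by push_cast; ring,
          abs_mul, abs_of_pos pi_pos]
        have h2 : (1:ℝ) ≤ |((o - 2*n : ℤ):ℝ)| := by
          have h := Int.one_le_abs (show o - 2*n ≠ 0 by omega)
          calc (1:ℝ) = ((1:ℤ):ℝ) := by norm_num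
            _ ≤ ((|o - 2*n| : ℤ):ℝ) := by exact_mod_cast h
            _ = |((o - 2*n : ℤ):ℝ)| := by push_cast; rfl
        nlinarith [pi_pos]
    constructor
    · exact ⟨θ₁, θ₂, θ₃, htarget⟩
    · rintro m ⟨u₁, u₂, u₃, rfl⟩
      rw [htarget, hM θ₁ θ₂ θ₃, hM u₁ u₂ u₃]
      exact Stmt3Aux.key_le r₁ r₂ r₃ l₁ l₂ l₃ K₁ K₂ K₃ hr₁ hr₂ hr₃ h12 (d:ℝ)
        hK1R hK2R hK3R b 0 a hm hKl hKs θ₁ θ₂ θ₃ u₁ u₂ u₃ π (τf u₁ u₂ u₃)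
        (fun n => hlead.2 ⟨n, rfl⟩) (hτf u₁ u₂ u₃).1 (τ0 u₁ u₂ u₃) (τπ u₁ u₂ u₃)
end

section
/- One has sup_x |r₁e^{i(t₁+λ₁x)}+r₂e^{i(t₂+λ₂x)}+r₃e^{i(t₃+λ₃x)}| / (r₁+r₂+r₃) ≥ cos(τ/2D), with equality if and only if τ = 0 or r₁ : r₂ : r₃ = |λ₃−λ₂| : |λ₃−λ₁| : |λ₂−λ₁|. -/
set_option maxHeartbeats 1000000

open Real

noncomputable def ee (x : ℝ) : ℂ := Complex.exp (Complex.I * (x:ℂ))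

lemma ee_abs (x : ℝ) : ‖(ee x)‖ = 1 := by
  simp [ee, Complex.norm_exp, mul_comm]

lemma ee_add (x y : ℝ) : ee (x + y) = ee x * ee y := by
  simp [ee, ← Complex.exp_add]; ring_nf

lemma ee_re (x : ℝ) : (ee x).re = cos x := by
  rw [ee, mul_comm, Complex.exp_mul_I]
  simp [Complex.cos_ofReal_re]

lemma ee_im (x : ℝ) : (ee x).im = sin x := by
  rw [ee, mul_comm, Complex.exp_mul_I]
  simp [Complex.sin_ofReal_re]

lemma ee_per (x : ℝ) (a : ℤ) : ee (x + 2*π*a) = ee x := by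
  rw [ee_add]
  have h : ee (2*π*(a:ℝ)) = 1 := by
    rw [ee, show Complex.I * ((2*π*(a:ℝ) : ℝ) : ℂ) = (a : ℤ) * (2*π*Complex.I) by push_cast; ring,
      Complex.exp_int_mul_two_pi_mul_I]
  rw [h, mul_one]

lemma ee_zero : ee 0 = 1 := by simp [ee]

-- squared modulus expansion
lemma F_sq (a b c u v : ℝ) :
    (‖((a:ℂ) * ee u + (b:ℂ) + (c:ℂ) * ee v)‖)^2 =
      a^2 + b^2 + c^2 + 2*a*b*cos u + 2*b*c*cos v + 2*a*c*cos (u - v) := by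
  rw [Complex.sq_norm, Complex.normSq_apply]
  simp only [Complex.add_re, Complex.add_im, Complex.mul_re, Complex.mul_im,
    Complex.ofReal_re, Complex.ofReal_im, ee_re, ee_im]
  rw [Real.cos_sub]
  nlinarith [sin_sq_add_cos_sq u, sin_sq_add_cos_sq v, sin_sq_add_cos_sq (u-v)]

lemma F_le_sum (a b c u v : ℝ) (ha : 0 ≤ a) (hb : 0 ≤ b) (hc : 0 ≤ c) :
    ‖((a:ℂ) * ee u + (b:ℂ) + (c:ℂ) * ee v)‖ ≤ a + b + c := by
  calc ‖((a:ℂ) * ee u + (b:ℂ) + (c:ℂ) * ee v)‖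
      ≤ ‖((a:ℂ) * ee u + (b:ℂ))‖ + ‖((c:ℂ) * ee v)‖ := norm_add_le _ _
    _ ≤ ‖((a:ℂ) * ee u)‖ + ‖(b:ℂ)‖ + ‖((c:ℂ) * ee v)‖ := by
        linarith [norm_add_le ((a:ℂ) * ee u) (b:ℂ)]
    _ = a + b + c := by
        rw [norm_mul, norm_mul, ee_abs, ee_abs, Complex.norm_real, Real.norm_eq_abs, Complex.norm_real, Real.norm_eq_abs,
          Complex.norm_real, Real.norm_eq_abs, abs_of_nonneg ha, abs_of_nonneg hb, abs_of_nonneg hc]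
        ring

lemma abs_ee_add_one (u : ℝ) : ‖(ee u + 1)‖ = 2*|cos (u/2)| := by
  have h1 : (‖(ee u + 1)‖)^2 = (2*|cos (u/2)|)^2 := by
    rw [Complex.sq_norm, Complex.normSq_apply]
    simp only [Complex.add_re, Complex.add_im, ee_re, ee_im, Complex.one_re, Complex.one_im]
    have hc : cos u = 2 * cos (u/2)^2 - 1 := by
      have h := Real.cos_sq (u/2)
      rw [show 2*(u/2) = u by ring] at h
      linarith
    rw [mul_pow, sq_abs]
    nlinarith [sin_sq_add_cos_sq u]
  have h2 : (0:ℝ) ≤ ‖(ee u + 1)‖ := norm_nonneg _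
  have h3 : (0:ℝ) ≤ 2*|cos (u/2)| := by positivity
  nlinarith [h1, h2, h3]

lemma abs_cos_eq (x : ℝ) : |cos x| = cos |x - π * round (x/π)| ∧ |x - π * round (x/π)| ≤ π/2 := by
  have hπ : (0:ℝ) < π := pi_pos
  have hx : x = (x/π)*π := by field_simp
  have h1 : |x - π * round (x/π)| ≤ π/2 := by
    have := abs_sub_round (x/π)
    rw [abs_sub_le_iff] at this ⊢
    constructor <;> nlinarith [this.1, this.2]
  refine ⟨?_, h1⟩
  have h2 : cos (x - round (x/π) * π) = (-1)^(round (x/π)) * cos x := cos_sub_int_mul_pi x _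
  have h3 : |cos (x - round (x/π) * π)| = |cos x| := by
    rw [h2, abs_mul]
    have : |((-1:ℝ))^(round (x/π))| = 1 := by
      rcases Int.even_or_odd (round (x/π)) with he | ho
      · rw [he.neg_one_zpow]; simp
      · rw [ho.neg_one_zpow]; simp
    rw [this, one_mul]
  have h4 : 0 ≤ cos (x - round (x/π) * π) := by
    apply Real.cos_nonneg_of_mem_Icc
    have := abs_le.mp (by rw [mul_comm]; exact h1 : |x - round (x/π) * π| ≤ π/2)
    exact ⟨by linarith [this.1], this.2⟩
  rw [← h3, abs_of_nonneg h4, mul_comm π, ← Real.cos_abs]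

lemma key_cos_ineq (P Q : ℤ) (hP : 0 < P) (hQ : 0 < Q) (θ : ℝ) (hθ0 : 0 ≤ θ)
    (hθ1 : (P+Q)*θ ≤ π/2) (x₁ x₂ : ℝ) (K : ℤ) (ε : ℝ) (hε : ε = 1 ∨ ε = -1)
    (hcon : Q*x₁ + P*x₂ = ε*((P+Q)*θ) + π*K) :
    Q*|cos x₁| + P*|cos x₂| ≤ (P+Q)*cos θ := by
  have hπ : (0:ℝ) < π := pi_pos
  obtain ⟨hc1, hd1⟩ := abs_cos_eq x₁
  obtain ⟨hc2, hd2⟩ := abs_cos_eq x₂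
  set m₁ := round (x₁/π) with hm₁
  set m₂ := round (x₂/π) with hm₂
  set d₁ := |x₁ - π * m₁| with hdd1
  set d₂ := |x₂ - π * m₂| with hdd2
  have hd1' : 0 ≤ d₁ := abs_nonneg _
  have hd2' : 0 ≤ d₂ := abs_nonneg _
  have hPpos : (0:ℝ) < (P:ℝ) := by exact_mod_cast hP
  have hQpos : (0:ℝ) < (Q:ℝ) := by exact_mod_cast hQ
  have hPQ : (0:ℝ) < (P:ℝ) + Q := by linarith
  have hεabs : |ε*((P+Q)*θ)| = ((P:ℝ)+Q)*θ := by
    rcases hε with h | h <;> rw [h] <;>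
      simp [abs_of_nonneg (mul_nonneg hPQ.le hθ0)]
  -- key: (P+Q)θ ≤ Q d₁ + P d₂
  have hkey : ((P:ℝ)+Q)*θ ≤ Q*d₁ + P*d₂ := by
    have habs : |(Q:ℝ)*(x₁ - π*m₁) + P*(x₂ - π*m₂)| ≤ Q*d₁ + P*d₂ := by
      calc |(Q:ℝ)*(x₁ - π*m₁) + P*(x₂ - π*m₂)| ≤ |(Q:ℝ)*(x₁ - π*m₁)| + |(P:ℝ)*(x₂ - π*m₂)| :=
            abs_add_le _ _
        _ = Q*d₁ + P*d₂ := by rw [abs_mul, abs_mul, abs_of_pos hQpos, abs_of_pos hPpos]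
    obtain ⟨M, hval⟩ : ∃ M : ℤ, (Q:ℝ)*(x₁ - π*m₁) + P*(x₂ - π*m₂) = ε*((P+Q)*θ) + π*M :=
      ⟨K - Q*m₁ - P*m₂, by push_cast; linear_combination hcon⟩
    rcases eq_or_ne M 0 with h0 | h0
    · rw [h0] at hval
      have h2 : |(Q:ℝ)*(x₁ - π*m₁) + P*(x₂ - π*m₂)| = ((P:ℝ)+Q)*θ := by
        rw [hval]; push_cast; rw [mul_zero, add_zero, hεabs]
      linarith [h2 ▸ habs]
    · have hM1 : (1:ℝ) ≤ |(M:ℝ)| := by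
        have h1 : (1:ℤ) ≤ |M| := Int.one_le_abs h0
        calc (1:ℝ) ≤ ((|M|:ℤ):ℝ) := by exact_mod_cast h1
          _ = |(M:ℝ)| := by push_cast; ring
      have hπM : π ≤ |π*(M:ℝ)| := by
        rw [abs_mul, abs_of_pos hπ]; nlinarith
      have htri : |π*(M:ℝ)| ≤ |ε*((P+Q)*θ) + π*M| + |ε*((P+Q)*θ)| := by
        have := abs_add_le (ε*((P+Q)*θ) + π*(M:ℝ)) (-(ε*((P+Q)*θ)))
        simp only [abs_neg] at this
        calc |π*(M:ℝ)| = |ε*((P+Q)*θ) + π*(M:ℝ) + -(ε*((P+Q)*θ))| := by ring_nf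
          _ ≤ |ε*((P+Q)*θ) + π*(M:ℝ)| + |ε*((P+Q)*θ)| := this
      rw [hεabs] at htri
      have : π/2 ≤ |(Q:ℝ)*(x₁ - π*m₁) + P*(x₂ - π*m₂)| := by
        rw [hval]; linarith
      linarith
  -- concavity
  rw [hc1, hc2]
  have hmem1 : d₁ ∈ Set.Icc (-(π/2)) (π/2) := ⟨by linarith, hd1⟩
  have hmem2 : d₂ ∈ Set.Icc (-(π/2)) (π/2) := ⟨by linarith, hd2⟩
  have hcc := (strictConcaveOn_cos_Icc.concaveOn).2 hmem1 hmem2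
    (le_of_lt (div_pos hQpos hPQ)) (le_of_lt (div_pos hPpos hPQ)) (by field_simp; ring)
  simp only [smul_eq_mul] at hcc
  set t := (Q:ℝ)/((P:ℝ)+Q) * d₁ + (P:ℝ)/((P:ℝ)+Q) * d₂ with ht
  have htθ : θ ≤ t := by
    rw [ht, div_mul_eq_mul_div, div_mul_eq_mul_div, ← add_div, le_div_iff₀ hPQ]
    linarith
  have htpi : t ≤ π := by
    have h1 : t ≤ π/2 := by
      rw [ht]
      have e1 : (Q:ℝ)/((P:ℝ)+Q) * d₁ ≤ (Q:ℝ)/((P:ℝ)+Q) * (π/2) :=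
        mul_le_mul_of_nonneg_left hd1 (div_pos hQpos hPQ).le
      have e2 : (P:ℝ)/((P:ℝ)+Q) * d₂ ≤ (P:ℝ)/((P:ℝ)+Q) * (π/2) :=
        mul_le_mul_of_nonneg_left hd2 (div_pos hPpos hPQ).le
      have e3 : (Q:ℝ)/((P:ℝ)+Q) * (π/2) + (P:ℝ)/((P:ℝ)+Q) * (π/2) = π/2 := by
        field_simp; ring
      linarith
    exact h1.trans (by linarith)
  have hcos : cos t ≤ cos θ := cos_le_cos_of_nonneg_of_le_pi hθ0 htpi htθ
  calc (Q:ℝ)*cos d₁ + (P:ℝ)*cos d₂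
      = ((P:ℝ)+Q) * ((Q:ℝ)/((P:ℝ)+Q) * cos d₁ + (P:ℝ)/((P:ℝ)+Q) * cos d₂) := by
        first
        | (field_simp; ring)
        | field_simp
    _ ≤ ((P:ℝ)+Q) * cos t := mul_le_mul_of_nonneg_left hcc hPQ.le
    _ ≤ ((P:ℝ)+Q) * cos θ := mul_le_mul_of_nonneg_left hcos hPQ.le

lemma tri_eq (r₁ r₂ r₃ u₁ u₂ u₃ : ℝ) (l₁ l₂ l₃ : ℤ) (x : ℝ) :
    trinomial r₁ r₂ r₃ u₁ u₂ u₃ l₁ l₂ l₃ x =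
      (r₁:ℂ) * ee (u₁ + l₁*x) + (r₂:ℂ) * ee (u₂ + l₂*x) + (r₃:ℂ) * ee (u₃ + l₃*x) := rfl

lemma tri_factor (a b c p r s : ℝ) :
    (a:ℂ) * ee p + (b:ℂ) * ee r + (c:ℂ) * ee s =
      ee r * ((a:ℂ) * ee (p - r) + (b:ℂ) + (c:ℂ) * ee (s - r)) := by
  have hb : ee p = ee r * ee (p - r) := by rw [← ee_add]; ring_nf
  have hc : ee s = ee r * ee (s - r) := by rw [← ee_add]; ring_nf
  rw [hb, hc]; ring

lemma abs_tri (r₁ r₂ r₃ u₁ u₂ u₃ : ℝ) (l₁ l₂ l₃ : ℤ) (x : ℝ) :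
    ‖(trinomial r₁ r₂ r₃ u₁ u₂ u₃ l₁ l₂ l₃ x)‖ =
      ‖((r₁:ℂ) * ee (u₁ - u₂ + (l₁ - l₂ : ℤ)*x) + (r₂:ℂ)
        + (r₃:ℂ) * ee (u₃ - u₂ + (l₃ - l₂ : ℤ)*x))‖ := by
  rw [tri_eq, tri_factor, norm_mul, ee_abs, one_mul]
  congr 2 <;> push_cast <;> ring

noncomputable def FF (r₁ r₂ r₃ w₁ w₂ : ℝ) : ℝ :=
  ‖((r₁:ℂ) * ee w₁ + (r₂:ℂ) + (r₃:ℂ) * ee w₂)‖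

lemma FF_sq (r₁ r₂ r₃ w₁ w₂ : ℝ) : (FF r₁ r₂ r₃ w₁ w₂)^2 =
    r₁^2 + r₂^2 + r₃^2 + 2*r₁*r₂*cos w₁ + 2*r₂*r₃*cos w₂ + 2*r₁*r₃*cos (w₁ - w₂) :=
  F_sq r₁ r₂ r₃ w₁ w₂

lemma FF_nonneg (r₁ r₂ r₃ w₁ w₂ : ℝ) : 0 ≤ FF r₁ r₂ r₃ w₁ w₂ := norm_nonneg _

lemma FF_le (r₁ r₂ r₃ w₁ w₂ : ℝ) (h1 : 0 ≤ r₁) (h2 : 0 ≤ r₂) (h3 : 0 ≤ r₃) :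
    FF r₁ r₂ r₃ w₁ w₂ ≤ r₁ + r₂ + r₃ := F_le_sum r₁ r₂ r₃ w₁ w₂ h1 h2 h3

lemma FF_per (r₁ r₂ r₃ w₁ w₂ : ℝ) (a b : ℤ) :
    FF r₁ r₂ r₃ (w₁ - 2*π*a) (w₂ - 2*π*b) = FF r₁ r₂ r₃ w₁ w₂ := by
  unfold FF
  rw [show w₁ - 2*π*a = w₁ + 2*π*(-a : ℤ) by push_cast; ring,
    show w₂ - 2*π*b = w₂ + 2*π*(-b : ℤ) by push_cast; ring, ee_per, ee_per]

lemma abs_tri' (r₁ r₂ r₃ u₁ u₂ u₃ : ℝ) (l₁ l₂ l₃ : ℤ) (x : ℝ) :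
    ‖(trinomial r₁ r₂ r₃ u₁ u₂ u₃ l₁ l₂ l₃ x)‖ =
      FF r₁ r₂ r₃ (u₁ - u₂ + (l₁ - l₂ : ℤ)*x) (u₃ - u₂ + (l₃ - l₂ : ℤ)*x) :=
  abs_tri r₁ r₂ r₃ u₁ u₂ u₃ l₁ l₂ l₃ x

lemma FF_pairing (a c w₁ w₂ : ℝ) (ha : 0 ≤ a) (hc : 0 ≤ c) :
    FF a (a + c) c w₁ w₂ ≤ a*(2*|cos (w₁/2)|) + c*(2*|cos (w₂/2)|) := by
  unfold FF
  have h1 : ((a:ℂ)) * ee w₁ + ((a + c : ℝ):ℂ) + (c:ℂ) * ee w₂ =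
      (a:ℂ) * (ee w₁ + 1) + (c:ℂ) * (ee w₂ + 1) := by push_cast; ring
  rw [h1]
  calc ‖((a:ℂ) * (ee w₁ + 1) + (c:ℂ) * (ee w₂ + 1))‖
      ≤ ‖((a:ℂ) * (ee w₁ + 1))‖ + ‖((c:ℂ) * (ee w₂ + 1))‖ :=
        norm_add_le _ _
    _ = a*(2*|cos (w₁/2)|) + c*(2*|cos (w₂/2)|) := by
        rw [norm_mul, norm_mul, abs_ee_add_one, abs_ee_add_one, Complex.norm_real, Real.norm_eq_abs,
          Complex.norm_real, Real.norm_eq_abs, abs_of_nonneg ha, abs_of_nonneg hc]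

lemma FF_zero (r₁ r₂ r₃ : ℝ) (h : 0 ≤ r₁ + r₂ + r₃) : FF r₁ r₂ r₃ 0 0 = r₁ + r₂ + r₃ := by
  unfold FF
  rw [ee_zero, mul_one, mul_one,
    show ((r₁:ℂ)) + (r₂:ℂ) + (r₃:ℂ) = ((r₁ + r₂ + r₃ : ℝ) : ℂ) by push_cast; ring,
    Complex.norm_real, Real.norm_eq_abs, abs_of_nonneg h]

lemma gcd_span (x y u v : ℤ) (h1 : ∃ a b : ℤ, u = a*x + b*y) (h2 : ∃ a b : ℤ, v = a*x + b*y)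
    (h3 : ∃ a b : ℤ, x = a*u + b*v) (h4 : ∃ a b : ℤ, y = a*u + b*v) :
    Int.gcd u v = Int.gcd x y := by
  apply Nat.dvd_antisymm
  · have hx : ((Int.gcd u v : ℤ)) ∣ x := by
      obtain ⟨a, b, rfl⟩ := h3
      exact dvd_add (Dvd.dvd.mul_left (Int.gcd_dvd_left _ _) a) (Dvd.dvd.mul_left (Int.gcd_dvd_right _ _) b)
    have hy : ((Int.gcd u v : ℤ)) ∣ y := by
      obtain ⟨a, b, rfl⟩ := h4
      exact dvd_add (Dvd.dvd.mul_left (Int.gcd_dvd_left _ _) a) (Dvd.dvd.mul_left (Int.gcd_dvd_right _ _) b)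
    exact_mod_cast Int.natCast_dvd_natCast.mp (Int.dvd_coe_gcd hx hy)
  · have hu : ((Int.gcd x y : ℤ)) ∣ u := by
      obtain ⟨a, b, rfl⟩ := h1
      exact dvd_add (Dvd.dvd.mul_left (Int.gcd_dvd_left _ _) a) (Dvd.dvd.mul_left (Int.gcd_dvd_right _ _) b)
    have hv : ((Int.gcd x y : ℤ)) ∣ v := by
      obtain ⟨a, b, rfl⟩ := h2
      exact dvd_add (Dvd.dvd.mul_left (Int.gcd_dvd_left _ _) a) (Dvd.dvd.mul_left (Int.gcd_dvd_right _ _) b)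
    exact_mod_cast Int.natCast_dvd_natCast.mp (Int.dvd_coe_gcd hu hv)

lemma absZR (a b : ℤ) : |((a - b : ℤ):ℝ)| = |((b - a : ℤ):ℝ)| := by
  push_cast; rw [abs_sub_comm]

lemma max3_123 (a b c : ℝ) : max (max a b) c = max (max a b) c := rfl
lemma max3_213 (a b c : ℝ) : max (max a b) c = max (max b a) c := by rw [max_comm a b]
lemma max3_231 (a b c : ℝ) : max (max a b) c = max (max b c) a := by rw [max_assoc, max_comm]
lemma max3_312 (a b c : ℝ) : max (max a b) c = max (max c a) b := by
  rw [max3_231, max3_231]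
lemma max3_132 (a b c : ℝ) : max (max a b) c = max (max a c) b := by
  rw [max3_231, max_comm b c, ← max3_231 a c b]
lemma max3_321 (a b c : ℝ) : max (max a b) c = max (max c b) a := by
  rw [max3_231, max_comm b c]

theorem main_sorted (l₁ l₂ l₃ : ℤ) (h12 : l₁ < l₂) (h23 : l₂ < l₃)
    (r₁ r₂ r₃ : ℝ) (hr₁ : 0 < r₁) (hr₂ : 0 < r₂) (hr₃ : 0 < r₃)
    (t₁ t₂ t₃ : ℝ)
    (d : ℕ) (hd : d = Int.gcd (l₂ - l₁) (l₃ - l₂))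
    (D : ℝ) (hD : D = max (max |((l₂ - l₁ : ℤ) : ℝ)| |((l₃ - l₂ : ℤ) : ℝ)|)
      |((l₃ - l₁ : ℤ) : ℝ)| / d)
    (τ : ℝ)
    (hτ : IsLeast {s : ℝ | ∃ n : ℤ,
      s = |((l₂ - l₃ : ℤ) : ℝ) / d * t₁ + ((l₃ - l₁ : ℤ) : ℝ) / d * t₂ +
        ((l₁ - l₂ : ℤ) : ℝ) / d * t₃ - 2 * π * n|} τ) :
    (⨆ x : ℝ, ‖(trinomial r₁ r₂ r₃ t₁ t₂ t₃ l₁ l₂ l₃ x)‖) / (r₁ + r₂ + r₃) ≥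
      Real.cos (τ / (2 * D)) ∧
    ((⨆ x : ℝ, ‖(trinomial r₁ r₂ r₃ t₁ t₂ t₃ l₁ l₂ l₃ x)‖) / (r₁ + r₂ + r₃) =
        Real.cos (τ / (2 * D)) ↔
      τ = 0 ∨ ∃ c : ℝ, 0 < c ∧ r₁ = c * |((l₃ - l₂ : ℤ) : ℝ)| ∧
        r₂ = c * |((l₃ - l₁ : ℤ) : ℝ)| ∧ r₃ = c * |((l₂ - l₁ : ℤ) : ℝ)|) := by
  have hπ : (0:ℝ) < π := pi_pos
  have hd0 : 0 < d := by
    rw [hd]; exact Int.gcd_pos_of_ne_zero_left _ (by omega)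
  have hdR : (0:ℝ) < (d:ℝ) := by exact_mod_cast hd0
  have hdZ : (0:ℤ) < (d:ℤ) := by exact_mod_cast hd0
  have hdvd1 : (d:ℤ) ∣ (l₂ - l₁) := by rw [hd]; exact Int.gcd_dvd_left _ _
  have hdvd2 : (d:ℤ) ∣ (l₃ - l₂) := by rw [hd]; exact Int.gcd_dvd_right _ _
  set P : ℤ := (l₂ - l₁) / (d:ℤ) with hPdef
  set Q : ℤ := (l₃ - l₂) / (d:ℤ) with hQdef
  have hPd : P * d = l₂ - l₁ := Int.ediv_mul_cancel hdvd1
  have hQd : Q * d = l₃ - l₂ := Int.ediv_mul_cancel hdvd2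
  have hP : 0 < P := by
    by_contra h; push_neg at h; nlinarith [hPd, hdZ, (by omega : (0:ℤ) < l₂ - l₁)]
  have hQ : 0 < Q := by
    by_contra h; push_neg at h; nlinarith [hQd, hdZ, (by omega : (0:ℤ) < l₃ - l₂)]
  have hcop : Int.gcd P Q = 1 := by
    have hg : (0:ℤ) < (Int.gcd (l₂ - l₁) (l₃ - l₂) : ℤ) := by
      rw [← hd]; exact hdZ
    have := Int.gcd_div_gcd_div_gcd (i := l₂ - l₁) (j := l₃ - l₂) (by exact_mod_cast hg)
    rw [hPdef, hQdef, hd]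
    exact this
  -- real casts
  have hPR : (0:ℝ) < (P:ℝ) := by exact_mod_cast hP
  have hQR : (0:ℝ) < (Q:ℝ) := by exact_mod_cast hQ
  have hPQR : (0:ℝ) < (P:ℝ) + (Q:ℝ) := by linarith
  have hPQ2 : (2:ℝ) ≤ (P:ℝ) + (Q:ℝ) := by
    have h1 : (1:ℝ) ≤ (P:ℝ) := by exact_mod_cast hP
    have h2 : (1:ℝ) ≤ (Q:ℝ) := by exact_mod_cast hQ
    linarith
  have c21 : ((l₂ - l₁ : ℤ):ℝ) = (P:ℝ) * d := by
    rw [← hPd]; push_cast; ring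
  have c32 : ((l₃ - l₂ : ℤ):ℝ) = (Q:ℝ) * d := by
    rw [← hQd]; push_cast; ring
  have c31 : ((l₃ - l₁ : ℤ):ℝ) = ((P:ℝ) + Q) * d := by
    have : (l₃ - l₁ : ℤ) = (l₂ - l₁) + (l₃ - l₂) := by ring
    rw [this]; push_cast [← hPd, ← hQd]; ring
  have c23 : ((l₂ - l₃ : ℤ):ℝ) = -((Q:ℝ) * d) := by
    have : (l₂ - l₃ : ℤ) = -(l₃ - l₂) := by ring
    rw [this]; push_cast [← hQd]; ring
  have c12 : ((l₁ - l₂ : ℤ):ℝ) = -((P:ℝ) * d) := by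
    have : (l₁ - l₂ : ℤ) = -(l₂ - l₁) := by ring
    rw [this]; push_cast [← hPd]; ring
  -- D = P + Q
  have hDeq : D = (P:ℝ) + Q := by
    rw [hD]
    have a1 : |((l₂ - l₁ : ℤ) : ℝ)| = (P:ℝ) * d := by
      rw [c21, abs_of_pos (by positivity)]
    have a2 : |((l₃ - l₂ : ℤ) : ℝ)| = (Q:ℝ) * d := by
      rw [c32, abs_of_pos (by positivity)]
    have a3 : |((l₃ - l₁ : ℤ) : ℝ)| = ((P:ℝ) + Q) * d := by
      rw [c31, abs_of_pos (by positivity)]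
    rw [a1, a2, a3, max_eq_right (max_le (by nlinarith) (by nlinarith))]
    field_simp
  -- E
  set E : ℝ := ((l₂ - l₃ : ℤ) : ℝ) / d * t₁ + ((l₃ - l₁ : ℤ) : ℝ) / d * t₂ +
      ((l₁ - l₂ : ℤ) : ℝ) / d * t₃ with hEdef
  have hE : E = -((Q:ℝ)*t₁) + ((P:ℝ)+Q)*t₂ - (P:ℝ)*t₃ := by
    rw [hEdef, c23, c31, c12]
    field_simp
    ring
  -- τ facts
  obtain ⟨⟨n₀, hn₀⟩, hlb⟩ := hτ
  have hτ0 : 0 ≤ τ := hn₀ ▸ abs_nonneg _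
  have hτπ : τ ≤ π := by
    have h1 := hlb ⟨round (E / (2*π)), rfl⟩
    have h2 : |E - 2*π*(round (E/(2*π)) : ℤ)| ≤ π := by
      have h3 := abs_sub_round (E/(2*π))
      have h4 : E - 2*π*(round (E/(2*π)) : ℤ) = (2*π) * (E/(2*π) - (round (E/(2*π)) : ℤ)) := by
        field_simp
      rw [h4, abs_mul, abs_of_pos (by linarith : (0:ℝ) < 2*π)]
      nlinarith
    exact le_trans (le_of_le_of_eq h1 rfl) h2
  obtain ⟨ε, hε, hετ⟩ : ∃ ε : ℝ, (ε = 1 ∨ ε = -1) ∧ ε * τ = -E + 2*π*n₀ := by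
    rcases (abs_eq hτ0).mp hn₀.symm with h | h
    · exact ⟨-1, Or.inr rfl, by linarith⟩
    · exact ⟨1, Or.inl rfl, by linarith⟩
  -- θ
  set θ : ℝ := τ / (2 * D) with hθdef
  have hθeq : ((P:ℝ)+Q) * θ = τ / 2 := by
    rw [hθdef, hDeq]; field_simp
  have hθ0 : 0 ≤ θ := by
    rw [hθdef, hDeq]; positivity
  have hθπ4 : θ ≤ π/4 := by
    have h1 : ((P:ℝ)+Q) * θ ≤ π/2 := by rw [hθeq]; linarith
    nlinarith [mul_nonneg (by linarith : (0:ℝ) ≤ (P:ℝ)+Q-2) hθ0]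
  have hcosθ : 0 < cos θ := by
    apply cos_pos_of_mem_Ioo
    constructor <;> [linarith; linarith]
  have hsinθ : 0 ≤ sin θ := by
    apply sin_nonneg_of_nonneg_of_le_pi hθ0; linarith
  -- F and g
  set g : ℝ → ℝ := fun x => ‖(trinomial r₁ r₂ r₃ t₁ t₂ t₃ l₁ l₂ l₃ x)‖ with hgdef
  have hgF : ∀ x : ℝ, g x =
      FF r₁ r₂ r₃ (t₁ - t₂ + ((l₁ - l₂ : ℤ):ℝ)*x) (t₃ - t₂ + ((l₃ - l₂ : ℤ):ℝ)*x) :=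
    fun x => abs_tri' r₁ r₂ r₃ t₁ t₂ t₃ l₁ l₂ l₃ x
  set S : ℝ := r₁ + r₂ + r₃ with hSdef
  have hS : 0 < S := by rw [hSdef]; linarith
  have hgle : ∀ x, g x ≤ S := fun x => by rw [hgF x]; exact FF_le _ _ _ _ _ hr₁.le hr₂.le hr₃.le
  have hbdd : BddAbove (Set.range g) := ⟨S, by rintro _ ⟨x, rfl⟩; exact hgle x⟩
  have hsup_le : (⨆ x, g x) ≤ S := ciSup_le hgle
  have hsup_ge : ∀ x, g x ≤ ⨆ x, g x := fun x => le_ciSup hbdd x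
  -- achievability
  have hbez : ∀ k : ℤ, ∃ a b : ℤ, Q*a + P*b = k := by
    intro k
    have h0 := Int.gcd_eq_gcd_ab P Q
    rw [hcop] at h0
    have h1 : (1:ℤ) = P * Int.gcdA P Q + Q * Int.gcdB P Q := by exact_mod_cast h0
    exact ⟨k * Int.gcdB P Q, k * Int.gcdA P Q, by linear_combination (-k) * h1⟩
  have hach : ∀ (w₁ w₂ : ℝ) (k : ℤ), (Q:ℝ)*w₁ + (P:ℝ)*w₂ = -E + 2*π*k →
      ∃ x : ℝ, FF r₁ r₂ r₃ w₁ w₂ = g x := by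
    intro w₁ w₂ k hk
    obtain ⟨a, b, hab⟩ := hbez k
    have habR : (Q:ℝ)*a + (P:ℝ)*b = (k:ℝ) := by exact_mod_cast hab
    refine ⟨(w₂ - (t₃ - t₂) - 2*π*b) / ((Q:ℝ)*d), ?_⟩
    set x := (w₂ - (t₃ - t₂) - 2*π*b) / ((Q:ℝ)*d) with hx
    have hQd0 : (Q:ℝ)*d ≠ 0 := by positivity
    have hQdx : (Q:ℝ)*d*x = w₂ - (t₃ - t₂) - 2*π*b := by
      rw [hx]; field_simp
    have hvx : t₃ - t₂ + ((l₃ - l₂ : ℤ):ℝ)*x = w₂ - 2*π*b := by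
      rw [c32]; linarith [hQdx]
    have hux : t₁ - t₂ + ((l₁ - l₂ : ℤ):ℝ)*x = w₁ - 2*π*a := by
      rw [c12]
      have hgoal : (Q:ℝ)*d*(t₁ - t₂ + (-((P:ℝ)*d))*x) = (Q:ℝ)*d*(w₁ - 2*π*a) := by
        linear_combination (-((P:ℝ)*(d:ℝ)))*hQdx + (-(d:ℝ))*hk + (d:ℝ)*hE + 2*π*(d:ℝ)*habR
      exact mul_left_cancel₀ hQd0 hgoal
    rw [hgF, hux, hvx, FF_per]
  -- constraint of g-points
  have hcon : ∀ x : ℝ, (Q:ℝ)*(t₁ - t₂ + ((l₁ - l₂ : ℤ):ℝ)*x) +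
      (P:ℝ)*(t₃ - t₂ + ((l₃ - l₂ : ℤ):ℝ)*x) = -E := by
    intro x
    rw [c12, c32, hE]; ring
  -- the distinguished curve of points
  have hptcon : ∀ s : ℝ, (Q:ℝ)*(ε*(2*θ + (P:ℝ)*s)) + (P:ℝ)*(ε*(2*θ - (Q:ℝ)*s)) =
      -E + 2*π*n₀ := by
    intro s
    have h1 : (Q:ℝ)*(ε*(2*θ + (P:ℝ)*s)) + (P:ℝ)*(ε*(2*θ - (Q:ℝ)*s)) =
        ε * (2*(((P:ℝ)+Q)*θ)) := by ring
    rw [h1, hθeq, ← hετ]; ring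
  have hptsq : ∀ s : ℝ, (FF r₁ r₂ r₃ (ε*(2*θ + (P:ℝ)*s)) (ε*(2*θ - (Q:ℝ)*s)))^2 =
      r₁^2 + r₂^2 + r₃^2 + 2*r₁*r₂*cos (2*θ + (P:ℝ)*s) + 2*r₂*r₃*cos (2*θ - (Q:ℝ)*s)
        + 2*r₁*r₃*cos (((P:ℝ)+Q)*s) := by
    intro s
    rw [FF_sq]
    rcases hε with h | h <;> rw [h]
    · rw [one_mul, one_mul,
        show 2*θ + (P:ℝ)*s - (2*θ - (Q:ℝ)*s) = ((P:ℝ)+Q)*s by ring]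
    · rw [show (-1:ℝ)*(2*θ + (P:ℝ)*s) = -(2*θ + (P:ℝ)*s) by ring,
        show (-1:ℝ)*(2*θ - (Q:ℝ)*s) = -(2*θ - (Q:ℝ)*s) by ring,
        show -(2*θ + (P:ℝ)*s) - -(2*θ - (Q:ℝ)*s) = -(((P:ℝ)+Q)*s) by ring,
        cos_neg, cos_neg, cos_neg]
  have hpt0 : (FF r₁ r₂ r₃ (ε*(2*θ + (P:ℝ)*0)) (ε*(2*θ - (Q:ℝ)*0)))^2 =
      S^2*(cos θ)^2 + (r₁ + r₃ - r₂)^2*(sin θ)^2 := by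
    rw [hptsq 0, show 2*θ + (P:ℝ)*0 = 2*θ by ring, show 2*θ - (Q:ℝ)*0 = 2*θ by ring,
      show ((P:ℝ)+Q)*0 = 0 by ring, Real.cos_zero, hSdef]
    have hc2 : cos (2*θ) = 2*(cos θ)^2 - 1 := cos_two_mul θ
    have hs2 : (sin θ)^2 = 1 - (cos θ)^2 := sin_sq θ
    rw [hc2, hs2]; ring
  -- lower bound: sup ≥ S cos θ
  have hlow : S * cos θ ≤ ⨆ x, g x := by
    obtain ⟨x, hx⟩ := hach _ _ n₀ (hptcon 0)
    have h1 : (S * cos θ)^2 ≤ (FF r₁ r₂ r₃ (ε*(2*θ + (P:ℝ)*0)) (ε*(2*θ - (Q:ℝ)*0)))^2 := by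
      rw [hpt0]; nlinarith [sq_nonneg ((r₁ + r₃ - r₂)*(sin θ))]
    have h2 : S * cos θ ≤ FF r₁ r₂ r₃ (ε*(2*θ + (P:ℝ)*0)) (ε*(2*θ - (Q:ℝ)*0)) := by
      nlinarith [FF_nonneg r₁ r₂ r₃ (ε*(2*θ + (P:ℝ)*0)) (ε*(2*θ - (Q:ℝ)*0)),
        mul_nonneg hS.le hcosθ.le]
    calc S * cos θ ≤ FF r₁ r₂ r₃ (ε*(2*θ + (P:ℝ)*0)) (ε*(2*θ - (Q:ℝ)*0)) := h2
      _ = g x := hx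
      _ ≤ ⨆ x, g x := hsup_ge x
  constructor
  · rw [ge_iff_le, le_div_iff₀ hS]
    calc cos (τ/(2*D)) * S = S * cos θ := by rw [← hθdef]; ring
      _ ≤ ⨆ x, g x := hlow
  constructor
  · -- equality → τ = 0 ∨ proportional
    intro heq
    by_cases hτz : τ = 0
    · exact Or.inl hτz
    right
    have hτpos : 0 < τ := lt_of_le_of_ne hτ0 (Ne.symm hτz)
    have hθpos : 0 < θ := by
      rw [hθdef, hDeq]; positivity
    have hsinθpos : 0 < sin θ := by
      apply sin_pos_of_pos_of_lt_pi hθpos; linarith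
    have hsupeq : (⨆ x, g x) = S * cos θ := by
      rw [div_eq_iff hS.ne'] at heq
      rw [heq]; ring
    -- r₂ = r₁ + r₃
    have hFpt_le : ∀ s : ℝ, (FF r₁ r₂ r₃ (ε*(2*θ + (P:ℝ)*s)) (ε*(2*θ - (Q:ℝ)*s))) ≤ S * cos θ := by
      intro s
      obtain ⟨x, hx⟩ := hach _ _ n₀ (hptcon s)
      rw [hx, ← hsupeq]; exact hsup_ge x
    have hr213 : r₂ = r₁ + r₃ := by
      have h1 := hFpt_le 0
      have h2 : (FF r₁ r₂ r₃ (ε*(2*θ + (P:ℝ)*0)) (ε*(2*θ - (Q:ℝ)*0)))^2 ≤ (S * cos θ)^2 := by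
        apply pow_le_pow_left₀ (FF_nonneg _ _ _ _ _) h1
      rw [hpt0] at h2
      have hring : (S*cos θ)^2 = S^2*(cos θ)^2 := by ring
      have h3 : (r₁ + r₃ - r₂)^2*(sin θ)^2 ≤ 0 := by linarith
      have h5 : ((r₁ + r₃ - r₂)*(sin θ))^2 = 0 := by
        have hr2 : ((r₁ + r₃ - r₂)*(sin θ))^2 = (r₁ + r₃ - r₂)^2*(sin θ)^2 := by ring
        have h4 : (0:ℝ) ≤ (r₁ + r₃ - r₂)^2*(sin θ)^2 := by positivity
        linarith
      have h6 : (r₁ + r₃ - r₂)*(sin θ) = 0 := by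
        exact pow_eq_zero_iff (by norm_num : (2:ℕ) ≠ 0) |>.mp h5
      rcases mul_eq_zero.mp h6 with h | h
      · linarith
      · exfalso; linarith [hsinθpos]
    -- derivative argument
    set h : ℝ → ℝ := fun s => r₁^2 + r₂^2 + r₃^2 + 2*r₁*r₂*cos (2*θ + (P:ℝ)*s)
      + 2*r₂*r₃*cos (2*θ - (Q:ℝ)*s) + 2*r₁*r₃*cos (((P:ℝ)+Q)*s) with hhdef
    have hmax : ∀ s : ℝ, h s ≤ h 0 := by
      intro s
      have h1 : h s = (FF r₁ r₂ r₃ (ε*(2*θ + (P:ℝ)*s)) (ε*(2*θ - (Q:ℝ)*s)))^2 := (hptsq s).symm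
      have h0' : h 0 = S^2*(cos θ)^2 := by
        rw [hhdef]
        simp only
        rw [show 2*θ + (P:ℝ)*0 = 2*θ by ring, show 2*θ - (Q:ℝ)*0 = 2*θ by ring,
          show ((P:ℝ)+Q)*0 = 0 by ring, Real.cos_zero]
        have hc2 : cos (2*θ) = 2*(cos θ)^2 - 1 := cos_two_mul θ
        rw [hc2, hSdef, hr213]; ring
      rw [h1, h0']
      have h2 : (FF r₁ r₂ r₃ (ε*(2*θ + (P:ℝ)*s)) (ε*(2*θ - (Q:ℝ)*s)))^2 ≤ (S*cos θ)^2 :=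
        pow_le_pow_left₀ (FF_nonneg _ _ _ _ _) (hFpt_le s) 2
      have hring : (S*cos θ)^2 = S^2*(cos θ)^2 := by ring
      linarith
    have hloc : IsLocalMax h 0 := Filter.Eventually.of_forall hmax
    have hder : HasDerivAt h
        (2*r₁*r₂*(-sin (2*θ + (P:ℝ)*0) * ((P:ℝ)*1)) + 2*r₂*r₃*(-sin (2*θ - (Q:ℝ)*0) * (0 - (Q:ℝ)*1))
          + 2*r₁*r₃*(-sin (((P:ℝ)+Q)*0) * (((P:ℝ)+Q)*1))) 0 := by
      have d1 : HasDerivAt (fun s : ℝ => 2*θ + (P:ℝ)*s) ((P:ℝ)*1) 0 :=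
        ((hasDerivAt_id 0).const_mul (P:ℝ)).const_add (2*θ)
      have d2 : HasDerivAt (fun s : ℝ => 2*θ - (Q:ℝ)*s) (0 - (Q:ℝ)*1) 0 :=
        (hasDerivAt_const 0 (2*θ)).sub ((hasDerivAt_id 0).const_mul (Q:ℝ))
      have d3 : HasDerivAt (fun s : ℝ => ((P:ℝ)+Q)*s) (((P:ℝ)+Q)*1) 0 :=
        (hasDerivAt_id 0).const_mul ((P:ℝ)+Q)
      exact (((d1.cos.const_mul (2*r₁*r₂)).const_add (r₁^2 + r₂^2 + r₃^2)).add
        (d2.cos.const_mul (2*r₂*r₃))).add (d3.cos.const_mul (2*r₁*r₃))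
    have hder0 : deriv h 0 = 0 := hloc.deriv_eq_zero
    have hdval : 2*r₁*r₂*(-sin (2*θ + (P:ℝ)*0) * ((P:ℝ)*1)) + 2*r₂*r₃*(-sin (2*θ - (Q:ℝ)*0) * (0 - (Q:ℝ)*1))
        + 2*r₁*r₃*(-sin (((P:ℝ)+Q)*0) * (((P:ℝ)+Q)*1)) = 0 := by
      rw [← hder.deriv]; exact hder0
    have hsin2θ : 0 < sin (2*θ) := by
      apply sin_pos_of_pos_of_lt_pi (by linarith)
      linarith
    have hkey : r₁ * (P:ℝ) = r₃ * (Q:ℝ) := by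
      rw [show 2*θ + (P:ℝ)*0 = 2*θ by ring, show 2*θ - (Q:ℝ)*0 = 2*θ by ring,
        show ((P:ℝ)+Q)*0 = 0 by ring, Real.sin_zero] at hdval
      have h6 : sin (2*θ) * (2*r₂) * (r₃*(Q:ℝ) - r₁*(P:ℝ)) = 0 := by linarith [hdval]
      have h7 : r₃*(Q:ℝ) - r₁*(P:ℝ) = 0 := by
        rcases mul_eq_zero.mp h6 with h | h
        · exfalso
          rcases mul_eq_zero.mp h with h' | h' <;> [linarith [hsin2θ]; linarith]
        · exact h
      linarith
    refine ⟨r₃/((P:ℝ)*d), by positivity, ?_, ?_, ?_⟩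
    · rw [c32, abs_of_pos (by positivity), div_mul_eq_mul_div,
        eq_div_iff (by positivity : (0:ℝ) < (P:ℝ)*d).ne']
      linear_combination (d:ℝ)*hkey
    · rw [c31, abs_of_pos (by positivity), div_mul_eq_mul_div,
        eq_div_iff (by positivity : (0:ℝ) < (P:ℝ)*d).ne']
      linear_combination (d:ℝ)*hkey + ((P:ℝ)*(d:ℝ))*hr213
    · rw [c21, abs_of_pos (by positivity)]
      field_simp
  · -- ← direction
    intro hor
    rcases hor with hτz | ⟨c, hc, hc1, hc2, hc3⟩
    · -- τ = 0
      have hE0 : E = 2*π*n₀ := by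
        have : |E - 2*π*n₀| = 0 := by rw [← hn₀, hτz]
        have := abs_eq_zero.mp this
        linarith
      have hsup : (⨆ x, g x) = S := by
        apply le_antisymm hsup_le
        obtain ⟨x, hx⟩ := hach 0 0 n₀ (by rw [hE0]; ring)
        rw [FF_zero r₁ r₂ r₃ (by linarith)] at hx
        rw [← hSdef] at hx
        rw [hx]
        exact hsup_ge x
      have hθz : θ = 0 := by rw [hθdef, hτz]; simp
      rw [hsup, hθz, Real.cos_zero]
      exact div_self hS.ne'
    · -- proportional
      have e1 : r₁ = c * ((Q:ℝ)*d) := by rw [hc1, c32, abs_of_pos (by positivity)]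
      have e2 : r₂ = c * (((P:ℝ)+Q)*d) := by rw [hc2, c31, abs_of_pos (by positivity)]
      have e3 : r₃ = c * ((P:ℝ)*d) := by rw [hc3, c21, abs_of_pos (by positivity)]
      have hr213 : r₂ = r₁ + r₃ := by rw [e1, e2, e3]; ring
      have hup : ∀ x : ℝ, g x ≤ S * cos θ := by
        intro x
        set w₁ := t₁ - t₂ + ((l₁ - l₂ : ℤ):ℝ)*x with hw₁
        set w₂ := t₃ - t₂ + ((l₃ - l₂ : ℤ):ℝ)*x with hw₂
        have hcase : g x ≤ r₁*(2*|cos (w₁/2)|) + r₃*(2*|cos (w₂/2)|) := by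
          rw [hgF x, ← hw₁, ← hw₂]
          have := FF_pairing r₁ r₃ w₁ w₂ hr₁.le hr₃.le
          rw [show r₁ + r₃ = r₂ by linarith] at this
          exact this
        have hkl : (Q:ℝ)*|cos (w₁/2)| + (P:ℝ)*|cos (w₂/2)| ≤ ((P:ℝ)+Q)*cos θ := by
          have hc := hcon x
          rw [← hw₁, ← hw₂] at hc
          exact key_cos_ineq P Q hP hQ θ hθ0 (by rw [hθeq]; linarith) (w₁/2) (w₂/2) (-n₀) ε hε
            (by push_cast; linear_combination (1/2)*hc - ε*hθeq - (1/2)*hετ)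
        calc g x ≤ r₁*(2*|cos (w₁/2)|) + r₃*(2*|cos (w₂/2)|) := hcase
          _ = 2*c*d*((Q:ℝ)*|cos (w₁/2)| + (P:ℝ)*|cos (w₂/2)|) := by rw [e1, e3]; ring
          _ ≤ 2*c*d*(((P:ℝ)+Q)*cos θ) :=
              mul_le_mul_of_nonneg_left hkl (by positivity)
          _ = S*cos θ := by rw [hSdef, e1, e2, e3]; ring
      have hsupeq2 : (⨆ x, g x) = S * cos θ := le_antisymm (ciSup_le hup) hlow
      rw [hsupeq2, mul_comm, mul_div_assoc, div_self hS.ne', mul_one]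

theorem stmt6 (l₁ l₂ l₃ : ℤ) (h12 : l₁ ≠ l₂) (h13 : l₁ ≠ l₃) (h23 : l₂ ≠ l₃)
    (r₁ r₂ r₃ : ℝ) (hr₁ : 0 < r₁) (hr₂ : 0 < r₂) (hr₃ : 0 < r₃)
    (t₁ t₂ t₃ : ℝ)
    (d : ℕ) (hd : d = Int.gcd (l₂ - l₁) (l₃ - l₂))
    (D : ℝ) (hD : D = max (max |((l₂ - l₁ : ℤ) : ℝ)| |((l₃ - l₂ : ℤ) : ℝ)|)
      |((l₃ - l₁ : ℤ) : ℝ)| / d)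
    (τ : ℝ)
    (hτ : IsLeast {s : ℝ | ∃ n : ℤ,
      s = |((l₂ - l₃ : ℤ) : ℝ) / d * t₁ + ((l₃ - l₁ : ℤ) : ℝ) / d * t₂ +
        ((l₁ - l₂ : ℤ) : ℝ) / d * t₃ - 2 * π * n|} τ) :
    (⨆ x : ℝ, ‖trinomial r₁ r₂ r₃ t₁ t₂ t₃ l₁ l₂ l₃ x‖) / (r₁ + r₂ + r₃) ≥
      Real.cos (τ / (2 * D)) ∧
    ((⨆ x : ℝ, ‖trinomial r₁ r₂ r₃ t₁ t₂ t₃ l₁ l₂ l₃ x‖) / (r₁ + r₂ + r₃) =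
        Real.cos (τ / (2 * D)) ↔
      τ = 0 ∨ ∃ c : ℝ, 0 < c ∧ r₁ = c * |((l₃ - l₂ : ℤ) : ℝ)| ∧
        r₂ = c * |((l₃ - l₁ : ℤ) : ℝ)| ∧ r₃ = c * |((l₂ - l₁ : ℤ) : ℝ)|) := by
  rcases lt_or_gt_of_ne h12 with a12 | a21 <;> rcases lt_or_gt_of_ne h13 with a13 | a31 <;>
    rcases lt_or_gt_of_ne h23 with a23 | a32
  · -- case (1, 2, 3)
    exact main_sorted l₁ l₂ l₃ a12 a23 r₁ r₂ r₃ hr₁ hr₂ hr₃ t₁ t₂ t₃ d hd D hD τ hτ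
  · -- case (1, 3, 2)
    have hgcd : Int.gcd (l₃ - l₁) (l₂ - l₃) = Int.gcd (l₂ - l₁) (l₃ - l₂) :=
      gcd_span _ _ _ _ ⟨1, 1, by ring⟩ ⟨0, -1, by ring⟩ ⟨1, 1, by ring⟩ ⟨0, -1, by ring⟩
    have hd' : d = Int.gcd (l₃ - l₁) (l₂ - l₃) := by rw [hgcd]; exact hd
    have hD' : D = max (max |((l₃ - l₁ : ℤ) : ℝ)| |((l₂ - l₃ : ℤ) : ℝ)|) |((l₂ - l₁ : ℤ) : ℝ)| / ↑d := by
      rw [hD]; congr 1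
      rw [absZR l₂ l₃]
      exact max3_321 _ _ _
    have hset : {s : ℝ | ∃ n : ℤ, s = |((l₂ - l₃ : ℤ) : ℝ) / ↑d * t₁ + ((l₃ - l₁ : ℤ) : ℝ) / ↑d * t₂ + ((l₁ - l₂ : ℤ) : ℝ) / ↑d * t₃ - 2 * π * ↑n|} =
        {s : ℝ | ∃ n : ℤ, s = |((l₃ - l₂ : ℤ) : ℝ) / ↑d * t₁ + ((l₂ - l₁ : ℤ) : ℝ) / ↑d * t₃ + ((l₁ - l₃ : ℤ) : ℝ) / ↑d * t₂ - 2 * π * ↑n|} := by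
      ext s; constructor <;> rintro ⟨n, rfl⟩
      · refine ⟨-n, ?_⟩
        have hnn : ((l₃ - l₂ : ℤ) : ℝ) / ↑d * t₁ + ((l₂ - l₁ : ℤ) : ℝ) / ↑d * t₃ + ((l₁ - l₃ : ℤ) : ℝ) / ↑d * t₂ - 2 * π * ↑(-n : ℤ) = -((((l₂ - l₃ : ℤ) : ℝ) / ↑d * t₁ + ((l₃ - l₁ : ℤ) : ℝ) / ↑d * t₂ + ((l₁ - l₂ : ℤ) : ℝ) / ↑d * t₃) - 2 * π * ↑n) := by push_cast; ring
        rw [hnn, abs_neg]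
      · refine ⟨-n, ?_⟩
        have hnn : ((l₂ - l₃ : ℤ) : ℝ) / ↑d * t₁ + ((l₃ - l₁ : ℤ) : ℝ) / ↑d * t₂ + ((l₁ - l₂ : ℤ) : ℝ) / ↑d * t₃ - 2 * π * ↑(-n : ℤ) = -((((l₃ - l₂ : ℤ) : ℝ) / ↑d * t₁ + ((l₂ - l₁ : ℤ) : ℝ) / ↑d * t₃ + ((l₁ - l₃ : ℤ) : ℝ) / ↑d * t₂) - 2 * π * ↑n) := by push_cast; ring
        rw [hnn, abs_neg]
    have hτ' := hset ▸ hτ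
    obtain ⟨key1, key2⟩ := main_sorted l₁ l₃ l₂ a13 a32 r₁ r₃ r₂ hr₁ hr₃ hr₂ t₁ t₃ t₂ d hd' D hD' τ hτ'
    have hsup : (⨆ x : ℝ, ‖(trinomial r₁ r₃ r₂ t₁ t₃ t₂ l₁ l₃ l₂ x)‖) =
        (⨆ x : ℝ, ‖(trinomial r₁ r₂ r₃ t₁ t₂ t₃ l₁ l₂ l₃ x)‖) := by
      congr 1; funext x; congr 1; simp only [trinomial]; ring
    have hsum : r₁ + r₃ + r₂ = r₁ + r₂ + r₃ := by ring
    rw [hsup, hsum] at key1 key2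
    refine ⟨key1, key2.trans ?_⟩
    constructor <;> rintro (h0 | ⟨c, hc, e1, e2, e3⟩)
    · exact Or.inl h0
    · exact Or.inr ⟨c, hc, (absZR l₂ l₃) ▸ e1, e3, e2⟩
    · exact Or.inl h0
    · exact Or.inr ⟨c, hc, (absZR l₃ l₂) ▸ e1, e3, e2⟩
  · exfalso; omega
  · -- case (3, 1, 2)
    have hgcd : Int.gcd (l₁ - l₃) (l₂ - l₁) = Int.gcd (l₂ - l₁) (l₃ - l₂) :=
      gcd_span _ _ _ _ ⟨-1, -1, by ring⟩ ⟨1, 0, by ring⟩ ⟨0, 1, by ring⟩ ⟨-1, -1, by ring⟩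
    have hd' : d = Int.gcd (l₁ - l₃) (l₂ - l₁) := by rw [hgcd]; exact hd
    have hD' : D = max (max |((l₁ - l₃ : ℤ) : ℝ)| |((l₂ - l₁ : ℤ) : ℝ)|) |((l₂ - l₃ : ℤ) : ℝ)| / ↑d := by
      rw [hD]; congr 1
      rw [absZR l₁ l₃, absZR l₂ l₃]
      exact max3_312 _ _ _
    have hset : {s : ℝ | ∃ n : ℤ, s = |((l₂ - l₃ : ℤ) : ℝ) / ↑d * t₁ + ((l₃ - l₁ : ℤ) : ℝ) / ↑d * t₂ + ((l₁ - l₂ : ℤ) : ℝ) / ↑d * t₃ - 2 * π * ↑n|} =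
        {s : ℝ | ∃ n : ℤ, s = |((l₁ - l₂ : ℤ) : ℝ) / ↑d * t₃ + ((l₂ - l₃ : ℤ) : ℝ) / ↑d * t₁ + ((l₃ - l₁ : ℤ) : ℝ) / ↑d * t₂ - 2 * π * ↑n|} := by
      ext s; constructor <;> rintro ⟨n, rfl⟩
      · exact ⟨n, by congr 1; push_cast; ring⟩
      · exact ⟨n, by congr 1; push_cast; ring⟩
    have hτ' := hset ▸ hτ
    obtain ⟨key1, key2⟩ := main_sorted l₃ l₁ l₂ a31 a12 r₃ r₁ r₂ hr₃ hr₁ hr₂ t₃ t₁ t₂ d hd' D hD' τ hτ'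
    have hsup : (⨆ x : ℝ, ‖(trinomial r₃ r₁ r₂ t₃ t₁ t₂ l₃ l₁ l₂ x)‖) =
        (⨆ x : ℝ, ‖(trinomial r₁ r₂ r₃ t₁ t₂ t₃ l₁ l₂ l₃ x)‖) := by
      congr 1; funext x; congr 1; simp only [trinomial]; ring
    have hsum : r₃ + r₁ + r₂ = r₁ + r₂ + r₃ := by ring
    rw [hsup, hsum] at key1 key2
    refine ⟨key1, key2.trans ?_⟩
    constructor <;> rintro (h0 | ⟨c, hc, e1, e2, e3⟩)
    · exact Or.inl h0
    · exact Or.inr ⟨c, hc, (absZR l₂ l₃) ▸ e2, (absZR l₁ l₃) ▸ e3, e1⟩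
    · exact Or.inl h0
    · exact Or.inr ⟨c, hc, e3, (absZR l₃ l₂) ▸ e1, (absZR l₃ l₁) ▸ e2⟩
  · -- case (2, 1, 3)
    have hgcd : Int.gcd (l₁ - l₂) (l₃ - l₁) = Int.gcd (l₂ - l₁) (l₃ - l₂) :=
      gcd_span _ _ _ _ ⟨-1, 0, by ring⟩ ⟨1, 1, by ring⟩ ⟨-1, 0, by ring⟩ ⟨1, 1, by ring⟩
    have hd' : d = Int.gcd (l₁ - l₂) (l₃ - l₁) := by rw [hgcd]; exact hd
    have hD' : D = max (max |((l₁ - l₂ : ℤ) : ℝ)| |((l₃ - l₁ : ℤ) : ℝ)|) |((l₃ - l₂ : ℤ) : ℝ)| / ↑d := by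
      rw [hD]; congr 1
      rw [absZR l₁ l₂]
      exact max3_132 _ _ _
    have hset : {s : ℝ | ∃ n : ℤ, s = |((l₂ - l₃ : ℤ) : ℝ) / ↑d * t₁ + ((l₃ - l₁ : ℤ) : ℝ) / ↑d * t₂ + ((l₁ - l₂ : ℤ) : ℝ) / ↑d * t₃ - 2 * π * ↑n|} =
        {s : ℝ | ∃ n : ℤ, s = |((l₁ - l₃ : ℤ) : ℝ) / ↑d * t₂ + ((l₃ - l₂ : ℤ) : ℝ) / ↑d * t₁ + ((l₂ - l₁ : ℤ) : ℝ) / ↑d * t₃ - 2 * π * ↑n|} := by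
      ext s; constructor <;> rintro ⟨n, rfl⟩
      · refine ⟨-n, ?_⟩
        have hnn : ((l₁ - l₃ : ℤ) : ℝ) / ↑d * t₂ + ((l₃ - l₂ : ℤ) : ℝ) / ↑d * t₁ + ((l₂ - l₁ : ℤ) : ℝ) / ↑d * t₃ - 2 * π * ↑(-n : ℤ) = -((((l₂ - l₃ : ℤ) : ℝ) / ↑d * t₁ + ((l₃ - l₁ : ℤ) : ℝ) / ↑d * t₂ + ((l₁ - l₂ : ℤ) : ℝ) / ↑d * t₃) - 2 * π * ↑n) := by push_cast; ring
        rw [hnn, abs_neg]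
      · refine ⟨-n, ?_⟩
        have hnn : ((l₂ - l₃ : ℤ) : ℝ) / ↑d * t₁ + ((l₃ - l₁ : ℤ) : ℝ) / ↑d * t₂ + ((l₁ - l₂ : ℤ) : ℝ) / ↑d * t₃ - 2 * π * ↑(-n : ℤ) = -((((l₁ - l₃ : ℤ) : ℝ) / ↑d * t₂ + ((l₃ - l₂ : ℤ) : ℝ) / ↑d * t₁ + ((l₂ - l₁ : ℤ) : ℝ) / ↑d * t₃) - 2 * π * ↑n) := by push_cast; ring
        rw [hnn, abs_neg]
    have hτ' := hset ▸ hτ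
    obtain ⟨key1, key2⟩ := main_sorted l₂ l₁ l₃ a21 a13 r₂ r₁ r₃ hr₂ hr₁ hr₃ t₂ t₁ t₃ d hd' D hD' τ hτ'
    have hsup : (⨆ x : ℝ, ‖(trinomial r₂ r₁ r₃ t₂ t₁ t₃ l₂ l₁ l₃ x)‖) =
        (⨆ x : ℝ, ‖(trinomial r₁ r₂ r₃ t₁ t₂ t₃ l₁ l₂ l₃ x)‖) := by
      congr 1; funext x; congr 1; simp only [trinomial]; ring
    have hsum : r₂ + r₁ + r₃ = r₁ + r₂ + r₃ := by ring
    rw [hsup, hsum] at key1 key2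
    refine ⟨key1, key2.trans ?_⟩
    constructor <;> rintro (h0 | ⟨c, hc, e1, e2, e3⟩)
    · exact Or.inl h0
    · exact Or.inr ⟨c, hc, e2, e1, (absZR l₁ l₂) ▸ e3⟩
    · exact Or.inl h0
    · exact Or.inr ⟨c, hc, e2, e1, (absZR l₂ l₁) ▸ e3⟩
  · exfalso; omega
  · -- case (2, 3, 1)
    have hgcd : Int.gcd (l₃ - l₂) (l₁ - l₃) = Int.gcd (l₂ - l₁) (l₃ - l₂) :=
      gcd_span _ _ _ _ ⟨0, 1, by ring⟩ ⟨-1, -1, by ring⟩ ⟨-1, -1, by ring⟩ ⟨1, 0, by ring⟩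
    have hd' : d = Int.gcd (l₃ - l₂) (l₁ - l₃) := by rw [hgcd]; exact hd
    have hD' : D = max (max |((l₃ - l₂ : ℤ) : ℝ)| |((l₁ - l₃ : ℤ) : ℝ)|) |((l₁ - l₂ : ℤ) : ℝ)| / ↑d := by
      rw [hD]; congr 1
      rw [absZR l₁ l₃, absZR l₁ l₂]
      exact max3_231 _ _ _
    have hset : {s : ℝ | ∃ n : ℤ, s = |((l₂ - l₃ : ℤ) : ℝ) / ↑d * t₁ + ((l₃ - l₁ : ℤ) : ℝ) / ↑d * t₂ + ((l₁ - l₂ : ℤ) : ℝ) / ↑d * t₃ - 2 * π * ↑n|} =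
        {s : ℝ | ∃ n : ℤ, s = |((l₃ - l₁ : ℤ) : ℝ) / ↑d * t₂ + ((l₁ - l₂ : ℤ) : ℝ) / ↑d * t₃ + ((l₂ - l₃ : ℤ) : ℝ) / ↑d * t₁ - 2 * π * ↑n|} := by
      ext s; constructor <;> rintro ⟨n, rfl⟩
      · exact ⟨n, by congr 1; push_cast; ring⟩
      · exact ⟨n, by congr 1; push_cast; ring⟩
    have hτ' := hset ▸ hτ
    obtain ⟨key1, key2⟩ := main_sorted l₂ l₃ l₁ a23 a31 r₂ r₃ r₁ hr₂ hr₃ hr₁ t₂ t₃ t₁ d hd' D hD' τ hτ'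
    have hsup : (⨆ x : ℝ, ‖(trinomial r₂ r₃ r₁ t₂ t₃ t₁ l₂ l₃ l₁ x)‖) =
        (⨆ x : ℝ, ‖(trinomial r₁ r₂ r₃ t₁ t₂ t₃ l₁ l₂ l₃ x)‖) := by
      congr 1; funext x; congr 1; simp only [trinomial]; ring
    have hsum : r₂ + r₃ + r₁ = r₁ + r₂ + r₃ := by ring
    rw [hsup, hsum] at key1 key2
    refine ⟨key1, key2.trans ?_⟩
    constructor <;> rintro (h0 | ⟨c, hc, e1, e2, e3⟩)
    · exact Or.inl h0
    · exact Or.inr ⟨c, hc, e3, (absZR l₁ l₃) ▸ e1, (absZR l₁ l₂) ▸ e2⟩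
    · exact Or.inl h0
    · exact Or.inr ⟨c, hc, (absZR l₃ l₁) ▸ e2, (absZR l₂ l₁) ▸ e3, e1⟩
  · -- case (3, 2, 1)
    have hgcd : Int.gcd (l₂ - l₃) (l₁ - l₂) = Int.gcd (l₂ - l₁) (l₃ - l₂) :=
      gcd_span _ _ _ _ ⟨0, -1, by ring⟩ ⟨-1, 0, by ring⟩ ⟨0, -1, by ring⟩ ⟨-1, 0, by ring⟩
    have hd' : d = Int.gcd (l₂ - l₃) (l₁ - l₂) := by rw [hgcd]; exact hd
    have hD' : D = max (max |((l₂ - l₃ : ℤ) : ℝ)| |((l₁ - l₂ : ℤ) : ℝ)|) |((l₁ - l₃ : ℤ) : ℝ)| / ↑d := by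
      rw [hD]; congr 1
      rw [absZR l₂ l₃, absZR l₁ l₂, absZR l₁ l₃]
      exact max3_213 _ _ _
    have hset : {s : ℝ | ∃ n : ℤ, s = |((l₂ - l₃ : ℤ) : ℝ) / ↑d * t₁ + ((l₃ - l₁ : ℤ) : ℝ) / ↑d * t₂ + ((l₁ - l₂ : ℤ) : ℝ) / ↑d * t₃ - 2 * π * ↑n|} =
        {s : ℝ | ∃ n : ℤ, s = |((l₂ - l₁ : ℤ) : ℝ) / ↑d * t₃ + ((l₁ - l₃ : ℤ) : ℝ) / ↑d * t₂ + ((l₃ - l₂ : ℤ) : ℝ) / ↑d * t₁ - 2 * π * ↑n|} := by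
      ext s; constructor <;> rintro ⟨n, rfl⟩
      · refine ⟨-n, ?_⟩
        have hnn : ((l₂ - l₁ : ℤ) : ℝ) / ↑d * t₃ + ((l₁ - l₃ : ℤ) : ℝ) / ↑d * t₂ + ((l₃ - l₂ : ℤ) : ℝ) / ↑d * t₁ - 2 * π * ↑(-n : ℤ) = -((((l₂ - l₃ : ℤ) : ℝ) / ↑d * t₁ + ((l₃ - l₁ : ℤ) : ℝ) / ↑d * t₂ + ((l₁ - l₂ : ℤ) : ℝ) / ↑d * t₃) - 2 * π * ↑n) := by push_cast; ring
        rw [hnn, abs_neg]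
      · refine ⟨-n, ?_⟩
        have hnn : ((l₂ - l₃ : ℤ) : ℝ) / ↑d * t₁ + ((l₃ - l₁ : ℤ) : ℝ) / ↑d * t₂ + ((l₁ - l₂ : ℤ) : ℝ) / ↑d * t₃ - 2 * π * ↑(-n : ℤ) = -((((l₂ - l₁ : ℤ) : ℝ) / ↑d * t₃ + ((l₁ - l₃ : ℤ) : ℝ) / ↑d * t₂ + ((l₃ - l₂ : ℤ) : ℝ) / ↑d * t₁) - 2 * π * ↑n) := by push_cast; ring
        rw [hnn, abs_neg]
    have hτ' := hset ▸ hτ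
    obtain ⟨key1, key2⟩ := main_sorted l₃ l₂ l₁ a32 a21 r₃ r₂ r₁ hr₃ hr₂ hr₁ t₃ t₂ t₁ d hd' D hD' τ hτ'
    have hsup : (⨆ x : ℝ, ‖(trinomial r₃ r₂ r₁ t₃ t₂ t₁ l₃ l₂ l₁ x)‖) =
        (⨆ x : ℝ, ‖(trinomial r₁ r₂ r₃ t₁ t₂ t₃ l₁ l₂ l₃ x)‖) := by
      congr 1; funext x; congr 1; simp only [trinomial]; ring
    have hsum : r₃ + r₂ + r₁ = r₁ + r₂ + r₃ := by ring
    rw [hsup, hsum] at key1 key2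
    refine ⟨key1, key2.trans ?_⟩
    constructor <;> rintro (h0 | ⟨c, hc, e1, e2, e3⟩)
    · exact Or.inl h0
    · exact Or.inr ⟨c, hc, (absZR l₂ l₃) ▸ e3, (absZR l₁ l₃) ▸ e2, (absZR l₁ l₂) ▸ e1⟩
    · exact Or.inl h0
    · exact Or.inr ⟨c, hc, (absZR l₂ l₁) ▸ e3, (absZR l₃ l₁) ▸ e2, (absZR l₃ l₂) ▸ e1⟩
end

section
/- The following are equivalent: (i) ((λ₂−λ₃)/d)t₁ + ((λ₃−λ₁)/d)t₂ + ((λ₁−λ₂)/d)t₃ ∈ 2πℤ; (ii) there exists a real number v with t₁+λ₁v ≡ t₂+λ₂v ≡ t₃+λ₃v (mod 2π). Moreover, when these hold, the unimodular relative Fourier multiplier (t₁,t₂,t₃) is an isometry on C_Λ: for all complex c₁, c₂, c₃, sup_x |Σ_j e^{it_j}c_j e^{iλ_jx}| = sup_x |Σ_j c_j e^{iλ_jx}|. -/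
open Real

/-- A general element of `C_Λ`, with complex coefficients. -/
noncomputable def trigCombo (c₁ c₂ c₃ : ℂ) (l₁ l₂ l₃ : ℤ) (x : ℝ) : ℂ :=
  c₁ * Complex.exp (Complex.I * ((l₁ * x : ℝ) : ℂ)) +
  c₂ * Complex.exp (Complex.I * ((l₂ * x : ℝ) : ℂ)) +
  c₃ * Complex.exp (Complex.I * ((l₃ * x : ℝ) : ℂ))

private lemma exp_term_eq (t θ v x : ℝ) (l : ℤ) (n : ℤ)
    (h : (t + l * v) - θ = 2 * π * n) :
    Complex.exp (Complex.I * (t : ℂ)) * Complex.exp (Complex.I * ((l * x : ℝ) : ℂ)) =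
    Complex.exp (Complex.I * (θ : ℂ)) * Complex.exp (Complex.I * ((l * (x - v) : ℝ) : ℂ)) := by
  rw [← Complex.exp_add, ← Complex.exp_add]
  have key : Complex.I * (t : ℂ) + Complex.I * ((l * x : ℝ) : ℂ)
      = (Complex.I * (θ : ℂ) + Complex.I * ((l * (x - v) : ℝ) : ℂ))
        + (n : ℂ) * (2 * (π : ℂ) * Complex.I) := by
    have hr : (t : ℝ) + l * x = (θ + l * (x - v)) + 2 * π * n := by linear_combination h
    have hc : (t : ℂ) + (l : ℂ) * (x : ℂ) = ((θ : ℂ) + (l : ℂ) * ((x : ℂ) - (v : ℂ)))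
        + 2 * (π : ℂ) * (n : ℂ) := by exact_mod_cast hr
    push_cast
    linear_combination Complex.I * hc
  rw [key, Complex.exp_add, Complex.exp_int_mul_two_pi_mul_I, mul_one]

theorem stmt9 (l₁ l₂ l₃ : ℤ) (h12 : l₁ ≠ l₂) (h13 : l₁ ≠ l₃) (h23 : l₂ ≠ l₃)
    (d : ℕ) (hd : d = Int.gcd (l₂ - l₁) (l₃ - l₂))
    (t₁ t₂ t₃ : ℝ) :
    -- (i) ↔ (ii)
    ((∃ n : ℤ, ((l₂ - l₃ : ℤ) : ℝ) / d * t₁ + ((l₃ - l₁ : ℤ) : ℝ) / d * t₂ +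
        ((l₁ - l₂ : ℤ) : ℝ) / d * t₃ = 2 * π * n) ↔
      (∃ v : ℝ, (∃ n : ℤ, (t₁ + l₁ * v) - (t₂ + l₂ * v) = 2 * π * n) ∧
        (∃ n : ℤ, (t₂ + l₂ * v) - (t₃ + l₃ * v) = 2 * π * n))) ∧
    -- moreover, when these hold, the multiplier `(t₁, t₂, t₃)` is an isometry on `C_Λ`
    ((∃ n : ℤ, ((l₂ - l₃ : ℤ) : ℝ) / d * t₁ + ((l₃ - l₁ : ℤ) : ℝ) / d * t₂ +
        ((l₁ - l₂ : ℤ) : ℝ) / d * t₃ = 2 * π * n) →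
      ∀ c₁ c₂ c₃ : ℂ,
        (⨆ x : ℝ, ‖trigCombo
          (Complex.exp (Complex.I * (t₁ : ℂ)) * c₁)
          (Complex.exp (Complex.I * (t₂ : ℂ)) * c₂)
          (Complex.exp (Complex.I * (t₃ : ℂ)) * c₃) l₁ l₂ l₃ x‖) =
        ⨆ x : ℝ, ‖trigCombo c₁ c₂ c₃ l₁ l₂ l₃ x‖) := by
  have hA0 : (l₂ - l₁ : ℤ) ≠ 0 := sub_ne_zero.mpr (Ne.symm h12)
  have hd0 : d ≠ 0 := by
    rw [hd]
    intro h
    exact hA0 ((Int.gcd_eq_zero_iff.mp h).1)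
  have hdR : (d : ℝ) ≠ 0 := Nat.cast_ne_zero.mpr hd0
  have hdZ : (d : ℤ) ≠ 0 := Int.natCast_ne_zero.mpr hd0
  obtain ⟨A', hA'⟩ : (d : ℤ) ∣ (l₂ - l₁) := hd ▸ Int.gcd_dvd_left (l₂ - l₁) (l₃ - l₂)
  obtain ⟨B', hB'⟩ : (d : ℤ) ∣ (l₃ - l₂) := hd ▸ Int.gcd_dvd_right (l₂ - l₁) (l₃ - l₂)
  have hAR : (l₂ : ℝ) - l₁ = (d : ℝ) * A' := by exact_mod_cast hA'
  have hBR : (l₃ : ℝ) - l₂ = (d : ℝ) * B' := by exact_mod_cast hB'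
  -- Bezout
  set u := Int.gcdA (l₂ - l₁) (l₃ - l₂) with hu
  set w := Int.gcdB (l₂ - l₁) (l₃ - l₂) with hw
  have hbez : (d : ℤ) = (l₂ - l₁) * u + (l₃ - l₂) * w := by
    rw [hd]; exact Int.gcd_eq_gcd_ab _ _
  have hbez' : A' * u + B' * w = 1 := by
    have h2 : (d : ℤ) * (A' * u + B' * w) = (d : ℤ) * 1 := by
      rw [mul_one]
      linear_combination -hbez - u * hA' - w * hB'
    exact mul_left_cancel₀ hdZ h2
  have hbezR : (A' : ℝ) * u + (B' : ℝ) * w = 1 := by exact_mod_cast hbez'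
  -- rewrite the LHS of (i)
  have hLHSeq : ((l₂ - l₃ : ℤ) : ℝ) / d * t₁ + ((l₃ - l₁ : ℤ) : ℝ) / d * t₂ +
      ((l₁ - l₂ : ℤ) : ℝ) / d * t₃ = (A' : ℝ) * (t₂ - t₃) - (B' : ℝ) * (t₁ - t₂) := by
    have e1 : ((l₂ - l₃ : ℤ) : ℝ) = (d : ℝ) * (-B') := by push_cast; linear_combination -hBR
    have e2 : ((l₃ - l₁ : ℤ) : ℝ) = (d : ℝ) * (A' + B') := by push_cast; linear_combination hAR + hBR
    have e3 : ((l₁ - l₂ : ℤ) : ℝ) = (d : ℝ) * (-A') := by push_cast; linear_combination -hAR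
    rw [e1, e2, e3]
    field_simp
    ring
  simp only [hLHSeq]
  -- forward direction: (i) → (ii), with explicit witnesses
  have fwd : (∃ n : ℤ, (A' : ℝ) * (t₂ - t₃) - (B' : ℝ) * (t₁ - t₂) = 2 * π * n) →
      ∃ v : ℝ, (∃ n : ℤ, (t₁ + l₁ * v) - (t₂ + l₂ * v) = 2 * π * n) ∧
        (∃ n : ℤ, (t₂ + l₂ * v) - (t₃ + l₃ * v) = 2 * π * n) := by
    rintro ⟨n, hn⟩
    refine ⟨((u : ℝ) * (t₁ - t₂) + (w : ℝ) * (t₂ - t₃)) / d, ⟨-(n * w), ?_⟩, ⟨n * u, ?_⟩⟩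
    · have hv : (d : ℝ) * (((u : ℝ) * (t₁ - t₂) + (w : ℝ) * (t₂ - t₃)) / d)
          = (u : ℝ) * (t₁ - t₂) + (w : ℝ) * (t₂ - t₃) := by field_simp
      push_cast
      linear_combination (((u : ℝ) * (t₁ - t₂) + (w : ℝ) * (t₂ - t₃)) / d) * (-hAR)
        - (A' : ℝ) * hv - (t₁ - t₂) * hbezR - (w : ℝ) * hn
    · have hv : (d : ℝ) * (((u : ℝ) * (t₁ - t₂) + (w : ℝ) * (t₂ - t₃)) / d)
          = (u : ℝ) * (t₁ - t₂) + (w : ℝ) * (t₂ - t₃) := by field_simp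
      push_cast
      linear_combination (((u : ℝ) * (t₁ - t₂) + (w : ℝ) * (t₂ - t₃)) / d) * (-hBR)
        - (B' : ℝ) * hv - (t₂ - t₃) * hbezR + (u : ℝ) * hn
  constructor
  · constructor
    · exact fwd
    · rintro ⟨v, ⟨n₁, h1⟩, ⟨n₂, h2⟩⟩
      refine ⟨A' * n₂ - B' * n₁, ?_⟩
      push_cast
      linear_combination (A' : ℝ) * h2 - (B' : ℝ) * h1 + (A' : ℝ) * v * hBR - (B' : ℝ) * v * hAR
  · rintro hi c₁ c₂ c₃
    obtain ⟨v, ⟨n₁, h1⟩, ⟨n₂, h2⟩⟩ := fwd hi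
    set θ : ℝ := t₁ + l₁ * v with hθ
    have T1 := exp_term_eq t₁ θ v
    have hfun : ∀ x : ℝ, trigCombo
        (Complex.exp (Complex.I * (t₁ : ℂ)) * c₁)
        (Complex.exp (Complex.I * (t₂ : ℂ)) * c₂)
        (Complex.exp (Complex.I * (t₃ : ℂ)) * c₃) l₁ l₂ l₃ x
        = Complex.exp (Complex.I * (θ : ℂ)) * trigCombo c₁ c₂ c₃ l₁ l₂ l₃ (x - v) := by
      intro x
      have e1 := exp_term_eq t₁ θ v x l₁ 0 (by simp [hθ])
      have e2 := exp_term_eq t₂ θ v x l₂ (-n₁) (by push_cast; linear_combination -h1)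
      have e3 := exp_term_eq t₃ θ v x l₃ (-(n₁ + n₂)) (by push_cast; linear_combination -h1 - h2)
      simp only [trigCombo]
      linear_combination c₁ * e1 + c₂ * e2 + c₃ * e3
    have habs : ∀ x : ℝ, ‖trigCombo
        (Complex.exp (Complex.I * (t₁ : ℂ)) * c₁)
        (Complex.exp (Complex.I * (t₂ : ℂ)) * c₂)
        (Complex.exp (Complex.I * (t₃ : ℂ)) * c₃) l₁ l₂ l₃ x‖
        = ‖trigCombo c₁ c₂ c₃ l₁ l₂ l₃ (x - v)‖ := by
      intro x
      rw [hfun x, norm_mul]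
      have : ‖Complex.exp (Complex.I * (θ : ℂ))‖ = 1 := by
        rw [mul_comm]; exact Complex.norm_exp_ofReal_mul_I θ
      rw [this, one_mul]
    simp only [habs]
    exact Function.Surjective.iSup_comp (f := fun x : ℝ => x - v)
      (fun y => ⟨y + v, by ring⟩)
      (fun y => ‖trigCombo c₁ c₂ c₃ l₁ l₂ l₃ y‖)
end

section
/- The function f attains its absolute maximum over ℝ at some point of the interval [−t/k, t/l]: there exists x ∈ [−t/k, t/l] with f(x) = sup_{y∈ℝ} f(y). -/
open Real

/-- `f(x) = |r₁e^{−ikx} + r₂e^{it} + r₃e^{ilx}|²`. -/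
noncomputable def fKL (r₁ r₂ r₃ t : ℝ) (k l : ℕ) (x : ℝ) : ℝ :=
  ‖(r₁ : ℂ) * Complex.exp (Complex.I * ((-(k : ℝ) * x : ℝ) : ℂ)) +
    (r₂ : ℂ) * Complex.exp (Complex.I * (t : ℂ)) +
    (r₃ : ℂ) * Complex.exp (Complex.I * ((l * x : ℝ) : ℂ))‖ ^ 2

lemma fKL_eq (r₁ r₂ r₃ t : ℝ) (k l : ℕ) (x : ℝ) :
    fKL r₁ r₂ r₃ t k l x = r₁^2 + r₂^2 + r₃^2
      + 2*r₁*r₂*Real.cos ((k:ℝ)*x + t) + 2*r₂*r₃*Real.cos ((l:ℝ)*x - t)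
      + 2*r₁*r₃*Real.cos ((k:ℝ)*x + (l:ℝ)*x) := by
  have e : ∀ θ : ℝ, Complex.exp (Complex.I * (θ:ℂ))
      = Complex.ofReal (Real.cos θ) + Complex.ofReal (Real.sin θ) * Complex.I := by
    intro θ; rw [mul_comm, Complex.exp_mul_I, Complex.ofReal_cos, Complex.ofReal_sin]
  unfold fKL
  rw [Complex.sq_norm, e, e, e]
  have hkx : -(k:ℝ) * x = -((k:ℝ)*x) := by ring
  rw [hkx, Real.cos_neg, Real.sin_neg]
  rw [Real.cos_add ((k:ℝ)*x) t, Real.cos_sub ((l:ℝ)*x) t, Real.cos_add ((k:ℝ)*x) ((l:ℝ)*x)]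
  simp only [Complex.normSq_apply, Complex.add_re, Complex.add_im, Complex.mul_re,
    Complex.mul_im, Complex.ofReal_re, Complex.ofReal_im, Complex.I_re, Complex.I_im,
    Complex.neg_re, Complex.neg_im]
  have h1 := Real.sin_sq_add_cos_sq ((k:ℝ)*x)
  have h2 := Real.sin_sq_add_cos_sq t
  have h3 := Real.sin_sq_add_cos_sq ((l:ℝ)*x)
  linear_combination r₁^2*h1 + r₂^2*h2 + r₃^2*h3

lemma key_ineq (A B : ℕ) (hA : 0 < A) (hB : 0 < B) (T u v : ℝ) (hT0 : 0 ≤ T) (hTπ : T ≤ π)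
    (m : ℤ) (hrel : (A:ℝ)*u - (B:ℝ)*v = T - 2*π*m) : T ≤ (A:ℝ)*|u| + (B:ℝ)*|v| := by
  have hA1 : (1:ℝ) ≤ A := by exact_mod_cast hA
  have hB1 : (1:ℝ) ≤ B := by exact_mod_cast hB
  have habs : |(A:ℝ)*u - (B:ℝ)*v| ≤ (A:ℝ)*|u| + (B:ℝ)*|v| := by
    calc |(A:ℝ)*u - (B:ℝ)*v| ≤ |(A:ℝ)*u| + |(B:ℝ)*v| := abs_sub _ _
    _ = (A:ℝ)*|u| + (B:ℝ)*|v| := by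
        rw [abs_mul, abs_mul, abs_of_nonneg (by positivity : (0:ℝ) ≤ (A:ℝ)),
          abs_of_nonneg (by positivity : (0:ℝ) ≤ (B:ℝ))]
  rcases eq_or_ne m 0 with hm | hm
  · subst hm
    simp only [Int.cast_zero, mul_zero, sub_zero] at hrel
    calc T = (A:ℝ)*u - (B:ℝ)*v := hrel.symm
    _ ≤ |(A:ℝ)*u - (B:ℝ)*v| := le_abs_self _
    _ ≤ _ := habs
  · have hm1 : (1:ℝ) ≤ |(m:ℝ)| := by
      have := Int.one_le_abs hm
      calc (1:ℝ) ≤ (|m|:ℤ) := by exact_mod_cast this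
      _ = |(m:ℝ)| := by push_cast; rfl
    have hπ : 0 < π := Real.pi_pos
    have hbig : π ≤ |T - 2*π*m| := by
      have h2 : |2*π*(m:ℝ)| = 2*π*|(m:ℝ)| := by
        rw [abs_mul, abs_of_nonneg (by positivity : (0:ℝ) ≤ 2*π)]
      have h3 : |2*π*(m:ℝ)| - |T| ≤ |T - 2*π*m| := by
        have := abs_sub_abs_le_abs_sub (2*π*(m:ℝ)) T
        rw [abs_sub_comm] at this
        linarith
      have hTabs : |T| = T := abs_of_nonneg hT0
      nlinarith
    calc T ≤ π := hTπ
    _ ≤ |T - 2*π*m| := hbig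
    _ = |(A:ℝ)*u - (B:ℝ)*v| := by rw [hrel]
    _ ≤ _ := habs

lemma exists_rep (a : ℝ) :
    ∃ u : ℝ, ∃ m : ℤ, a = u + 2*π*m ∧ |u| ≤ π ∧ Real.cos a = Real.cos |u| := by
  refine ⟨toIocMod Real.two_pi_pos (-π) a, toIocDiv Real.two_pi_pos (-π) a, ?_, ?_, ?_⟩
  · have := toIocMod_add_toIocDiv_zsmul Real.two_pi_pos (-π) a
    rw [zsmul_eq_mul] at this
    linarith [this]
  · have h := toIocMod_mem_Ioc Real.two_pi_pos (-π) a
    rw [Set.mem_Ioc] at h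
    rw [abs_le]; constructor <;> linarith [h.1, h.2]
  · have h : a = toIocMod Real.two_pi_pos (-π) a + (toIocDiv Real.two_pi_pos (-π) a) * (2*π) := by
      have := toIocMod_add_toIocDiv_zsmul Real.two_pi_pos (-π) a
      rw [zsmul_eq_mul] at this
      linarith [this]
    rw [Real.cos_abs]
    conv_lhs => rw [h]
    rw [Real.cos_add_int_mul_two_pi]

lemma fKL_exists_max (r₁ r₂ r₃ t : ℝ) (k l : ℕ) :
    ∃ x₀ : ℝ, ∀ y : ℝ, fKL r₁ r₂ r₃ t k l y ≤ fKL r₁ r₂ r₃ t k l x₀ := by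
  have hper : Function.Periodic (fKL r₁ r₂ r₃ t k l) (2*π) := by
    intro x
    rw [fKL_eq, fKL_eq]
    have c1 : (k:ℝ)*(x+2*π) + t = ((k:ℝ)*x + t) + ((k:ℤ):ℝ)*(2*π) := by push_cast; ring
    have c2 : (l:ℝ)*(x+2*π) - t = ((l:ℝ)*x - t) + ((l:ℤ):ℝ)*(2*π) := by push_cast; ring
    set n3 : ℤ := (k:ℤ) + (l:ℤ) with hn3
    have c3 : (k:ℝ)*(x+2*π) + (l:ℝ)*(x+2*π)
        = ((k:ℝ)*x + (l:ℝ)*x) + (n3:ℝ)*(2*π) := by rw [hn3]; push_cast; ring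
    rw [c1, c2, c3, Real.cos_add_int_mul_two_pi, Real.cos_add_int_mul_two_pi,
      Real.cos_add_int_mul_two_pi]
  have hcont : Continuous (fKL r₁ r₂ r₃ t k l) := by
    have hfe : (fKL r₁ r₂ r₃ t k l) = fun x => r₁^2 + r₂^2 + r₃^2
        + 2*r₁*r₂*Real.cos ((k:ℝ)*x + t) + 2*r₂*r₃*Real.cos ((l:ℝ)*x - t)
        + 2*r₁*r₃*Real.cos ((k:ℝ)*x + (l:ℝ)*x) := funext (fKL_eq r₁ r₂ r₃ t k l)
    rw [hfe]; fun_prop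
  obtain ⟨x₀, _, hx₀⟩ := isCompact_Icc.exists_isMaxOn
    (Set.nonempty_Icc.2 (by positivity : (0:ℝ) ≤ 2*π)) hcont.continuousOn
  refine ⟨x₀, fun y => ?_⟩
  obtain ⟨z, hz, hfz⟩ := hper.exists_mem_Ico₀ Real.two_pi_pos y
  rw [hfz]
  exact hx₀ (Set.Ico_subset_Icc_self hz)

set_option maxHeartbeats 4000000 in
theorem stmt10 (k l : ℕ) (hk : 0 < k) (hl : 0 < l) (hkl : Nat.Coprime k l)
    (r₁ r₂ r₃ : ℝ) (hr₁ : 0 < r₁) (hr₂ : 0 < r₂) (hr₃ : 0 < r₃)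
    (t : ℝ) (ht : t ∈ Set.Icc 0 (π / (k + l))) :
    ∃ x ∈ Set.Icc (-t / k) (t / l),
      ∀ y : ℝ, fKL r₁ r₂ r₃ t k l y ≤ fKL r₁ r₂ r₃ t k l x := by
  obtain ⟨x₀, hmax⟩ := fKL_exists_max r₁ r₂ r₃ t k l
  have kp : (0:ℝ) < k := by exact_mod_cast hk
  have lp : (0:ℝ) < l := by exact_mod_cast hl
  have klp : (0:ℝ) < (k:ℝ) + l := by linarith
  have ht0 : 0 ≤ t := ht.1
  have hT0 : 0 ≤ ((k:ℝ)+l)*t := mul_nonneg klp.le ht0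
  have hTπ : ((k:ℝ)+l)*t ≤ π := by
    have h := ht.2
    rw [le_div_iff₀ klp] at h
    linarith
  obtain ⟨ua, ma, ha, haπ, hacos⟩ := exists_rep ((k:ℝ)*x₀ + t)
  obtain ⟨ub, mb, hb, hbπ, hbcos⟩ := exists_rep ((l:ℝ)*x₀ - t)
  obtain ⟨uc, mc, hc, hcπ, hccos⟩ := exists_rep ((k:ℝ)*x₀ + (l:ℝ)*x₀)
  set α := |ua| with hα
  set β := |ub| with hβ
  set γ := |uc| with hγ
  have α0 : 0 ≤ α := abs_nonneg _
  have β0 : 0 ≤ β := abs_nonneg _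
  have γ0 : 0 ≤ γ := abs_nonneg _
  -- three key inequalities
  have K1 : ((k:ℝ)+l)*t ≤ (l:ℝ)*α + (k:ℝ)*β := by
    apply key_ineq l k hl hk _ ua ub hT0 hTπ ((l:ℤ)*ma - (k:ℤ)*mb)
    push_cast
    linear_combination (-(l:ℝ))*ha + (k:ℝ)*hb
  have K2 : ((k:ℝ)+l)*t ≤ (l:ℝ)*γ + ((k+l:ℕ):ℝ)*β := by
    apply key_ineq l (k+l) hl (by omega) _ uc ub hT0 hTπ ((l:ℤ)*mc - ((k:ℤ)+l)*mb)
    push_cast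
    linear_combination (-(l:ℝ))*hc + ((k:ℝ)+l)*hb
  have K3 : ((k:ℝ)+l)*t ≤ ((k+l:ℕ):ℝ)*α + (k:ℝ)*γ := by
    apply key_ineq (k+l) k (by omega) hk _ ua uc hT0 hTπ (((k:ℤ)+l)*ma - (k:ℤ)*mc)
    push_cast
    linear_combination (-((k:ℝ)+l))*ha + (k:ℝ)*hc
  have Kcast : ((k+l:ℕ):ℝ) = (k:ℝ) + l := by push_cast; ring
  rw [Kcast] at K2 K3
  -- the point x'
  set x' := max (max (-t/(k:ℝ)) ((t - β)/(l:ℝ))) (-γ/((k:ℝ)+l)) with hx'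
  have lb1 : -t/(k:ℝ) ≤ x' := le_trans (le_max_left _ _) (le_max_left _ _)
  have lb2 : (t - β)/(l:ℝ) ≤ x' := le_trans (le_max_right _ _) (le_max_left _ _)
  have lb3 : -γ/((k:ℝ)+l) ≤ x' := le_max_right _ _
  have ub1 : x' ≤ t/(l:ℝ) := by
    apply max_le (max_le ?_ ?_) ?_
    · rw [div_le_div_iff₀ kp lp]; nlinarith [mul_nonneg ht0 lp.le, mul_nonneg ht0 kp.le]
    · rw [div_le_div_iff₀ lp lp]; nlinarith [mul_nonneg β0 lp.le]
    · have h1 : -γ/((k:ℝ)+l) ≤ 0 := by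
        rw [neg_div]; exact neg_nonpos.mpr (div_nonneg γ0 klp.le)
      have h2 : 0 ≤ t/(l:ℝ) := div_nonneg ht0 lp.le
      linarith
  have ub2 : x' ≤ (α - t)/(k:ℝ) := by
    apply max_le (max_le ?_ ?_) ?_
    · rw [div_le_div_iff₀ kp kp]; nlinarith [mul_nonneg α0 kp.le]
    · rw [div_le_div_iff₀ lp kp]; nlinarith [K1]
    · rw [div_le_div_iff₀ klp kp]; nlinarith [K3]
  have ub3 : x' ≤ γ/((k:ℝ)+l) := by
    apply max_le (max_le ?_ ?_) ?_
    · have h1 : -t/(k:ℝ) ≤ 0 := by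
        rw [neg_div]; exact neg_nonpos.mpr (div_nonneg ht0 kp.le)
      have h2 : 0 ≤ γ/((k:ℝ)+l) := div_nonneg γ0 klp.le
      linarith
    · rw [div_le_div_iff₀ lp klp]; nlinarith [K2]
    · rw [div_le_div_iff₀ klp klp]; nlinarith [mul_nonneg γ0 klp.le]
  -- multiplied-out bounds
  have cancel : ∀ (c z : ℝ), 0 < c → c * (z / c) = z := by
    intro c z hc; rw [mul_comm]; exact div_mul_cancel₀ z (ne_of_gt hc)
  have lb1' : -t ≤ (k:ℝ) * x' := by
    have h := mul_le_mul_of_nonneg_left lb1 kp.le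
    have h2 := cancel _ (-t) kp
    linarith only [h, h2]
  have lb2' : t - β ≤ (l:ℝ) * x' := by
    have h := mul_le_mul_of_nonneg_left lb2 lp.le
    have h2 := cancel _ (t - β) lp
    linarith only [h, h2]
  have lb3' : -γ ≤ ((k:ℝ)+l) * x' := by
    have h := mul_le_mul_of_nonneg_left lb3 klp.le
    have h2 := cancel _ (-γ) klp
    linarith only [h, h2]
  have ub1' : (l:ℝ) * x' ≤ t := by
    have h := mul_le_mul_of_nonneg_left ub1 lp.le
    have h2 := cancel _ t lp
    linarith only [h, h2]
  have ub2' : (k:ℝ) * x' ≤ α - t := by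
    have h := mul_le_mul_of_nonneg_left ub2 kp.le
    have h2 := cancel _ (α - t) kp
    linarith only [h, h2]
  have ub3' : ((k:ℝ)+l) * x' ≤ γ := by
    have h := mul_le_mul_of_nonneg_left ub3 klp.le
    have h2 := cancel _ γ klp
    linarith only [h, h2]
  -- cosine comparisons
  have απ : α ≤ π := haπ
  have βπ : β ≤ π := hbπ
  have γπ : γ ≤ π := hcπ
  have m1 : Real.cos ((k:ℝ)*x₀ + t) ≤ Real.cos ((k:ℝ)*x' + t) := by
    rw [hacos]
    exact Real.cos_le_cos_of_nonneg_of_le_pi (by linarith only [lb1', ht0]) απ (by linarith only [ub2'])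
  have m2 : Real.cos ((l:ℝ)*x₀ - t) ≤ Real.cos ((l:ℝ)*x' - t) := by
    rw [hbcos]
    have hrw : Real.cos ((l:ℝ)*x' - t) = Real.cos (t - (l:ℝ)*x') := by
      rw [← Real.cos_neg]; ring_nf
    rw [hrw]
    exact Real.cos_le_cos_of_nonneg_of_le_pi (by linarith only [ub1']) βπ (by linarith only [lb2'])
  have m3 : Real.cos ((k:ℝ)*x₀ + (l:ℝ)*x₀) ≤ Real.cos ((k:ℝ)*x' + (l:ℝ)*x') := by
    rw [hccos, ← Real.cos_abs ((k:ℝ)*x' + (l:ℝ)*x')]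
    apply Real.cos_le_cos_of_nonneg_of_le_pi (abs_nonneg _) γπ
    rw [abs_le]
    constructor
    · linarith only [lb3']
    · linarith only [ub3']
  -- conclude
  refine ⟨x', ?_, fun y => ?_⟩
  · exact ⟨lb1, ub1⟩
  · calc fKL r₁ r₂ r₃ t k l y ≤ fKL r₁ r₂ r₃ t k l x₀ := hmax y
    _ ≤ fKL r₁ r₂ r₃ t k l x' := by
        rw [fKL_eq, fKL_eq]
        have p1 : (0:ℝ) ≤ 2*r₁*r₂ := by positivity
        have p2 : (0:ℝ) ≤ 2*r₂*r₃ := by positivity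
        have p3 : (0:ℝ) ≤ 2*r₁*r₃ := by positivity
        linarith only [mul_le_mul_of_nonneg_left m1 p1, mul_le_mul_of_nonneg_left m2 p2,
          mul_le_mul_of_nonneg_left m3 p3]
end

section
/- The function f*(t) = sup_x |r₁e^{−ikx} + r₂e^{it} + r₃e^{ilx}| of the real variable t is even and 2π/(k+l)-periodic, and it is strictly decreasing on [0, π/(k+l)]; in particular min_t f*(t) = f*(π/(k+l)). -/
open Real


noncomputable def phi3 (r₁ r₂ r₃ u v : ℝ) : ℝ :=
  r₁^2 + r₂^2 + r₃^2 + 2*r₁*r₂*Real.cos u + 2*r₂*r₃*Real.cos v + 2*r₁*r₃*Real.cos (u - v)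

theorem phi3_eq_normSq (r₁ r₂ r₃ a b c : ℝ) :
    phi3 r₁ r₂ r₃ (b - a) (b - c) = Complex.normSq
      ((r₁ : ℂ) * Complex.exp (Complex.I * a) + (r₂ : ℂ) * Complex.exp (Complex.I * b) +
       (r₃ : ℂ) * Complex.exp (Complex.I * c)) := by
  have h : ∀ x : ℝ, Complex.exp (Complex.I * x) = Complex.mk (Real.cos x) (Real.sin x) := by
    intro x
    rw [mul_comm, Complex.exp_mul_I]
    simp [Complex.ext_iff, Complex.cos_ofReal_re, Complex.sin_ofReal_re]
  simp only [h, Complex.normSq_mk, Complex.normSq_apply, Complex.add_re, Complex.add_im,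
    Complex.mul_re, Complex.mul_im, Complex.ofReal_re, Complex.ofReal_im]
  simp only [phi3]
  rw [show (b-a)-(b-c) = c - a by ring]
  simp only [Real.cos_sub]
  linear_combination (-(r₁^2)) * (Real.sin_sq_add_cos_sq a) + (-(r₂^2)) * (Real.sin_sq_add_cos_sq b) +
    (-(r₃^2)) * (Real.sin_sq_add_cos_sq c)

theorem abs3 (r₁ r₂ r₃ a b c : ℝ) :
    ‖(r₁ : ℂ) * Complex.exp (Complex.I * a) + (r₂ : ℂ) * Complex.exp (Complex.I * b) +
       (r₃ : ℂ) * Complex.exp (Complex.I * c)‖ = Real.sqrt (phi3 r₁ r₂ r₃ (b - a) (b - c)) := by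
  rw [Complex.norm_def, phi3_eq_normSq]

theorem phi3_nonneg (r₁ r₂ r₃ u v : ℝ) : 0 ≤ phi3 r₁ r₂ r₃ u v := by
  have := phi3_eq_normSq r₁ r₂ r₃ 0 u (u - v)
  rw [sub_zero, sub_sub_cancel] at this
  rw [this]
  exact Complex.normSq_nonneg _

theorem phi3_shift (r₁ r₂ r₃ u v : ℝ) (m n : ℤ) :
    phi3 r₁ r₂ r₃ (u + m * (2*π)) (v + n * (2*π)) = phi3 r₁ r₂ r₃ u v := by
  have h3 : (u + m*(2*π)) - (v + n*(2*π)) = (u - v) + ((m - n : ℤ) : ℝ) * (2*π) := by push_cast; ring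
  simp only [phi3, h3, Real.cos_add_int_mul_two_pi]

theorem phi3_neg (r₁ r₂ r₃ u v : ℝ) :
    phi3 r₁ r₂ r₃ (-u) (-v) = phi3 r₁ r₂ r₃ u v := by
  simp only [phi3, show -u - -v = -(u-v) by ring, Real.cos_neg]

-- reduction of an angle to [0, π]
theorem angle_reduce (u : ℝ) : ∃ w : ℝ, ∃ ε : ℝ, ∃ n : ℤ,
    w ∈ Set.Icc 0 π ∧ Real.cos w = Real.cos u ∧ Real.sin w = |Real.sin u| ∧
    (ε = 1 ∨ ε = -1) ∧ u = ε * w + n * (2*π) := by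
  set n := round (u / (2*π)) with hn
  have hpi := Real.pi_pos
  have h2pi : (0:ℝ) < 2*π := by linarith
  set d := u - n * (2*π) with hd
  have hdle : |d| ≤ π := by
    have hr := abs_sub_round (u / (2*π))
    have h1 : |u / (2*π) - (n:ℝ)| * (2*π) ≤ (1/2) * (2*π) :=
      mul_le_mul_of_nonneg_right hr h2pi.le
    have h2 : (u / (2*π) - (n:ℝ)) * (2*π) = d := by rw [hd]; field_simp
    have h3 : |d| = |u / (2*π) - (n:ℝ)| * (2*π) := by
      rw [← h2, abs_mul, abs_of_pos h2pi]
    rw [h3]; linarith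
  have hcos : Real.cos d = Real.cos u := by
    rw [hd]; rw [sub_eq_add_neg, ← neg_mul, ← Int.cast_neg]
    exact Real.cos_add_int_mul_two_pi u (-n)
  have hsin : Real.sin d = Real.sin u := by
    rw [hd, sub_eq_add_neg, ← neg_mul, ← Int.cast_neg]
    exact Real.sin_add_int_mul_two_pi u (-n)
  rcases le_or_gt 0 d with h0 | h0
  · refine ⟨d, 1, n, ⟨h0, (abs_le.mp hdle).2⟩, hcos, ?_, Or.inl rfl, by rw [hd]; ring⟩
    rw [hsin, abs_of_nonneg]
    rw [← hsin]; exact Real.sin_nonneg_of_nonneg_of_le_pi h0 (abs_le.mp hdle).2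
  · refine ⟨-d, -1, n, ⟨by linarith, by linarith [(abs_le.mp hdle).1]⟩, by rw [Real.cos_neg, hcos],
      ?_, Or.inr rfl, by rw [hd]; ring⟩
    rw [Real.sin_neg, hsin, abs_of_nonpos]
    rw [← hsin]
    exact Real.sin_nonpos_of_nonpos_of_neg_pi_le h0.le (by linarith [(abs_le.mp hdle).1])

theorem sigma_ge {A B s e₁ e₂ : ℝ} {M : ℤ} (hA : 0 ≤ A) (hB : 0 ≤ B)
    (he₁ : e₁ = 1 ∨ e₁ = -1) (he₂ : e₂ = 1 ∨ e₂ = -1)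
    (hs : s = e₁*A + e₂*B + M*(2*π)) (h0 : 0 < s) (hπ : s ≤ π) : s ≤ A + B := by
  have hpi := Real.pi_pos
  by_contra h
  push_neg at h
  have hub : e₁*A + e₂*B ≤ A + B := by rcases he₁ with h1|h1 <;> rcases he₂ with h2|h2 <;>
    simp [h1, h2] <;> linarith
  have hlb : -(A + B) ≤ e₁*A + e₂*B := by rcases he₁ with h1|h1 <;> rcases he₂ with h2|h2 <;>
    simp [h1, h2] <;> linarith
  rcases le_or_gt M 0 with hM | hM
  · have : (M:ℝ) ≤ 0 := by exact_mod_cast hM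
    nlinarith
  · have : (1:ℝ) ≤ (M:ℝ) := by exact_mod_cast hM
    nlinarith

theorem ciSup_comp_surj {g e : ℝ → ℝ} (he : Function.Surjective e) :
    (⨆ x, g (e x)) = ⨆ x, g x := by
  rw [iSup, iSup]
  congr 1
  exact he.range_comp g

theorem periodic_attains {g : ℝ → ℝ} (hg : Continuous g) (hp : Function.Periodic g (2*π)) :
    ∃ x₀, ∀ x, g x ≤ g x₀ := by
  have h2pi : (0:ℝ) < 2*π := by linarith [Real.pi_pos]
  obtain ⟨x₀, _, hx₀⟩ := (isCompact_Icc (a := (0:ℝ)) (b := 2*π)).exists_isMaxOn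
    ⟨0, le_refl 0, h2pi.le⟩ hg.continuousOn
  refine ⟨x₀, fun x => ?_⟩
  have h1 : g x = g (x - ⌊x / (2*π)⌋ * (2*π)) := (hp.sub_int_mul_eq _).symm
  rw [h1]
  exact hx₀ ⟨Int.sub_floor_div_mul_nonneg x h2pi, (Int.sub_floor_div_mul_lt x h2pi).le⟩

theorem cos_le_cos_shrink {w : ℝ} (hw : |w| ≤ π) {α : ℝ} (h0 : 0 ≤ α) (h1 : α ≤ 1) :
    Real.cos w ≤ Real.cos (α*w) := by
  rw [← Real.cos_abs w, ← Real.cos_abs (α*w)]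
  apply Real.cos_le_cos_of_nonneg_of_le_pi (abs_nonneg _) hw
  rw [abs_mul, abs_of_nonneg h0]
  nlinarith [abs_nonneg w]

theorem cos_lt_cos_shrink {w : ℝ} (hw0 : 0 < w) (hwπ : w ≤ π) {α : ℝ} (h0 : 0 ≤ α) (h1 : α < 1) :
    Real.cos w < Real.cos (α*w) :=
  Real.cos_lt_cos_of_nonneg_of_le_pi (by positivity) hwπ (by nlinarith)

set_option maxHeartbeats 1600000 in
theorem stmt16 (k l : ℕ) (hk : 0 < k) (hl : 0 < l) (hkl : Nat.Coprime k l)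
    (r₁ r₂ r₃ : ℝ) (hr₁ : 0 < r₁) (hr₂ : 0 < r₂) (hr₃ : 0 < r₃)
    (F : ℝ → ℝ)
    (hF : ∀ t : ℝ, F t = ⨆ x : ℝ, ‖
      (r₁ : ℂ) * Complex.exp (Complex.I * ((-(k : ℝ) * x : ℝ) : ℂ)) +
       (r₂ : ℂ) * Complex.exp (Complex.I * (t : ℂ)) +
       (r₃ : ℂ) * Complex.exp (Complex.I * ((l * x : ℝ) : ℂ))‖) :
    -- F is even
    (∀ t : ℝ, F (-t) = F t) ∧
    -- F is 2π/(k+l)-periodic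
    (∀ t : ℝ, F (t + 2 * π / (k + l)) = F t) ∧
    -- F is strictly decreasing on [0, π/(k+l)]
    StrictAntiOn F (Set.Icc 0 (π / (k + l))) ∧
    -- in particular, the minimum of F is F(π/(k+l))
    (∀ t : ℝ, F (π / (k + l)) ≤ F t) := by
  have hpi := Real.pi_pos
  have hkR : (0:ℝ) < k := by exact_mod_cast hk
  have hlR : (0:ℝ) < l := by exact_mod_cast hl
  have hK : (0:ℝ) < (k:ℝ) + l := by linarith
  set f : ℝ → ℝ → ℝ := fun t x => Real.sqrt (phi3 r₁ r₂ r₃ (t + k*x) (t - l*x)) with hfdef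
  have hfeq : ∀ t x : ℝ, f t x = Real.sqrt (phi3 r₁ r₂ r₃ (t + k*x) (t - l*x)) :=
    fun _ _ => rfl
  -- F in terms of f
  have hFt : ∀ t, F t = ⨆ x, f t x := by
    intro t
    rw [hF t]
    congr 1
    funext x
    rw [abs3 r₁ r₂ r₃ (-(k:ℝ)*x) t ((l:ℝ)*x)]
    simp only [hfdef]
    rw [show t - -(k:ℝ)*x = t + k*x by ring]
  -- continuity
  have hcont : ∀ t, Continuous (f t) := by
    intro t
    apply Real.continuous_sqrt.comp
    simp only [phi3]
    fun_prop
  -- periodicity of f t in x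
  have hperf : ∀ t, Function.Periodic (f t) (2*π) := by
    intro t x
    simp only [hfdef]
    rw [show t + (k:ℝ)*(x + 2*π) = (t + k*x) + ((k:ℤ):ℝ)*(2*π) by push_cast; ring,
        show t - (l:ℝ)*(x + 2*π) = (t - l*x) + ((-(l:ℤ) : ℤ):ℝ)*(2*π) by push_cast; ring,
        phi3_shift]
  -- boundedness
  have hbdd : ∀ t, BddAbove (Set.range (f t)) := by
    intro t
    refine ⟨Real.sqrt (r₁^2+r₂^2+r₃^2+2*r₁*r₂+2*r₂*r₃+2*r₁*r₃), ?_⟩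
    rintro y ⟨x, rfl⟩
    apply Real.sqrt_le_sqrt
    simp only [phi3]
    nlinarith [Real.cos_le_one (t + (k:ℝ)*x), Real.cos_le_one (t - (l:ℝ)*x),
      Real.cos_le_one ((t + (k:ℝ)*x) - (t - (l:ℝ)*x)),
      mul_pos hr₁ hr₂, mul_pos hr₂ hr₃, mul_pos hr₁ hr₃,
      Real.neg_one_le_cos (t + (k:ℝ)*x), Real.neg_one_le_cos (t - (l:ℝ)*x),
      Real.neg_one_le_cos ((t + (k:ℝ)*x) - (t - (l:ℝ)*x))]
  have hle : ∀ t x, f t x ≤ F t := by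
    intro t x
    rw [hFt]
    exact le_ciSup (hbdd t) x
  have hattain : ∀ t, ∃ x₀, F t = f t x₀ := by
    intro t
    obtain ⟨x₀, hx₀⟩ := periodic_attains (hcont t) (hperf t)
    refine ⟨x₀, ?_⟩
    rw [hFt]
    exact le_antisymm (ciSup_le hx₀) (le_ciSup (hbdd t) x₀)
  -- EVENNESS
  have heven : ∀ t, F (-t) = F t := by
    intro t
    rw [hFt, hFt]
    rw [← ciSup_comp_surj (g := f (-t)) (e := fun x : ℝ => -x) neg_surjective]
    congr 1
    funext x
    simp only [hfdef]
    rw [show -t + (k:ℝ)*(-x) = -(t + k*x) by ring, show -t - (l:ℝ)*(-x) = -(t - l*x) by ring,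
      phi3_neg]
  -- PERIODICITY
  have hcop2 : Nat.Coprime k (k + l) := by
    rw [Nat.add_comm]
    exact Nat.coprime_add_self_right.mpr hkl
  obtain ⟨a, b, hab⟩ := Nat.isCoprime_iff_coprime.mpr hcop2
  -- a * k + b * (k+l) = 1 in ℤ
  have hiz1 : (1 : ℤ) - k*a = b*(k+l) := by push_cast at hab ⊢; linarith
  have hiz2 : (1 : ℤ) + l*a = (a+b)*(k+l) := by push_cast at hab ⊢; linear_combination -hab
  have hr1 : (1:ℝ) - k*a = b*((k:ℝ)+l) := by exact_mod_cast hiz1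
  have hr2 : (1:ℝ) + l*a = ((a:ℝ)+b)*((k:ℝ)+l) := by exact_mod_cast hiz2
  set c : ℝ := 2*π*(-(a:ℝ))/((k:ℝ)+l) with hcdef
  have e1 : 2*π/((k:ℝ)+l) + k*c = ((b:ℤ):ℝ)*(2*π) := by
    rw [hcdef]
    field_simp
    linear_combination hr1
  have e2 : 2*π/((k:ℝ)+l) - l*c = (((a+b:ℤ)):ℝ)*(2*π) := by
    rw [hcdef]
    field_simp
    push_cast
    linear_combination hr2
  have hperF : ∀ t, F (t + 2*π/((k:ℝ)+l)) = F t := by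
    intro t
    rw [hFt, hFt]
    rw [← ciSup_comp_surj (g := f (t + 2*π/((k:ℝ)+l))) (e := fun x : ℝ => x + c)
      (fun y => ⟨y - c, by ring⟩)]
    congr 1
    funext x
    simp only [hfdef]
    rw [show t + 2*π/((k:ℝ)+l) + (k:ℝ)*(x + c) = (t + k*x) + (2*π/((k:ℝ)+l) + k*c) by ring,
        show t + 2*π/((k:ℝ)+l) - (l:ℝ)*(x + c) = (t - l*x) + (2*π/((k:ℝ)+l) - l*c) by ring,
        e1, e2, phi3_shift]
  -- STRICT ANTITONE
  have hanti : StrictAntiOn F (Set.Icc 0 (π / ((k:ℝ) + l))) := by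
    intro t' ht' t ht hlt
    obtain ⟨x₀, hFx₀⟩ := hattain t
    obtain ⟨u, hudef⟩ : ∃ z : ℝ, z = t + (k:ℝ)*x₀ := ⟨_, rfl⟩
    obtain ⟨v, hvdef⟩ : ∃ z : ℝ, z = t - (l:ℝ)*x₀ := ⟨_, rfl⟩
    obtain ⟨ub, ep1, n₁, hubmem, hcosu, hsinu, hep1, huev⟩ := angle_reduce u
    obtain ⟨vb, ep2, n₂, hvbmem, hcosv, hsinv, hep2, hvev⟩ := angle_reduce v
    have hs0 : 0 < ((k:ℝ)+l)*t := mul_pos hK (lt_of_le_of_lt ht'.1 hlt)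
    have hsπ : ((k:ℝ)+l)*t ≤ π := by
      have := ht.2
      rw [le_div_iff₀ hK] at this
      linarith
    have hs' : ((k:ℝ)+l)*t' < ((k:ℝ)+l)*t := by nlinarith
    have hs'0 : 0 ≤ ((k:ℝ)+l)*t' := mul_nonneg hK.le ht'.1
    have hA : 0 ≤ (l:ℝ)*ub := mul_nonneg hlR.le hubmem.1
    have hB : 0 ≤ (k:ℝ)*vb := mul_nonneg hkR.le hvbmem.1
    have hse : ((k:ℝ)+l)*t = ep1*((l:ℝ)*ub) + ep2*((k:ℝ)*vb) + ((l*n₁ + k*n₂ : ℤ):ℝ)*(2*π) := by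
      have : (l:ℝ)*u + (k:ℝ)*v = ((k:ℝ)+l)*t := by rw [hudef, hvdef]; ring
      rw [← this, huev, hvev]
      push_cast
      ring
    have hσ : ((k:ℝ)+l)*t ≤ (l:ℝ)*ub + (k:ℝ)*vb := sigma_ge hA hB hep1 hep2 hse hs0 hsπ
    have hσ0 : 0 < (l:ℝ)*ub + (k:ℝ)*vb := lt_of_lt_of_le hs0 hσ
    obtain ⟨α, hαdef⟩ : ∃ z : ℝ, z = ((k:ℝ)+l)*t' / ((l:ℝ)*ub + (k:ℝ)*vb) := ⟨_, rfl⟩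
    have hα0 : 0 ≤ α := by rw [hαdef]; exact div_nonneg hs'0 hσ0.le
    have hα1 : α < 1 := by rw [hαdef]; exact (div_lt_one hσ0).mpr (lt_of_lt_of_le hs' hσ)
    have hαAB : α * ((l:ℝ)*ub + (k:ℝ)*vb) = ((k:ℝ)+l)*t' := by
      rw [hαdef]; exact div_mul_cancel₀ _ hσ0.ne'
    obtain ⟨x', hx'def⟩ : ∃ z : ℝ, z = (α*ub - α*vb)/((k:ℝ)+l) := ⟨_, rfl⟩
    have hKx' : ((k:ℝ)+l) * x' = α*ub - α*vb := by
      rw [hx'def]; field_simp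
    have harg1 : t' + (k:ℝ)*x' = α*ub := by
      apply mul_left_cancel₀ hK.ne'
      calc ((k:ℝ)+l) * (t' + k*x') = ((k:ℝ)+l)*t' + (k:ℝ)*(((k:ℝ)+l)*x') := by ring
        _ = α*((l:ℝ)*ub + (k:ℝ)*vb) + (k:ℝ)*(α*ub - α*vb) := by rw [hKx', ← hαAB]
        _ = ((k:ℝ)+l) * (α*ub) := by ring
    have harg2 : t' - (l:ℝ)*x' = α*vb := by
      apply mul_left_cancel₀ hK.ne'
      calc ((k:ℝ)+l) * (t' - l*x') = ((k:ℝ)+l)*t' - (l:ℝ)*(((k:ℝ)+l)*x') := by ring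
        _ = α*((l:ℝ)*ub + (k:ℝ)*vb) - (l:ℝ)*(α*ub - α*vb) := by rw [hKx', ← hαAB]
        _ = ((k:ℝ)+l) * (α*vb) := by ring
    -- comparison of phi3 values
    have h3uv : Real.cos (u - v) ≤ Real.cos (ub - vb) := by
      have he : Real.cos (ub - vb) = Real.cos u * Real.cos v + |Real.sin u| * |Real.sin v| := by
        rw [Real.cos_sub ub vb, hcosu, hcosv, hsinu, hsinv]
      have he2 : Real.cos (u - v) = Real.cos u * Real.cos v + Real.sin u * Real.sin v :=
        Real.cos_sub u v
      have : Real.sin u * Real.sin v ≤ |Real.sin u| * |Real.sin v| := by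
        rw [← abs_mul]; exact le_abs_self _
      rw [he, he2]; linarith
    have c1 : phi3 r₁ r₂ r₃ u v ≤ phi3 r₁ r₂ r₃ ub vb := by
      have m3 := mul_le_mul_of_nonneg_left h3uv (by positivity : (0:ℝ) ≤ 2*r₁*r₃)
      simp only [phi3, hcosu, hcosv]
      linarith
    have hwa : |ub - vb| ≤ π := abs_le.mpr ⟨by linarith [hubmem.1, hvbmem.2], by linarith [hubmem.2, hvbmem.1]⟩
    have c2 : phi3 r₁ r₂ r₃ ub vb < phi3 r₁ r₂ r₃ (α*ub) (α*vb) := by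
      have h1 : Real.cos ub ≤ Real.cos (α*ub) := by
        apply cos_le_cos_shrink _ hα0 hα1.le
        rw [abs_of_nonneg hubmem.1]; exact hubmem.2
      have h2 : Real.cos vb ≤ Real.cos (α*vb) := by
        apply cos_le_cos_shrink _ hα0 hα1.le
        rw [abs_of_nonneg hvbmem.1]; exact hvbmem.2
      have h3 : Real.cos (ub - vb) ≤ Real.cos (α*ub - α*vb) := by
        rw [show α*ub - α*vb = α*(ub - vb) by ring]
        exact cos_le_cos_shrink hwa hα0 hα1.le
      have hstrict : 0 < ub ∨ 0 < vb := by
        by_contra hcon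
        push_neg at hcon
        have h1' : ub = 0 := le_antisymm hcon.1 hubmem.1
        have h2' : vb = 0 := le_antisymm hcon.2 hvbmem.1
        rw [h1', h2'] at hσ0
        simp at hσ0
      have m2 := mul_le_mul_of_nonneg_left h2 (by positivity : (0:ℝ) ≤ 2*r₂*r₃)
      have m1 := mul_le_mul_of_nonneg_left h1 (by positivity : (0:ℝ) ≤ 2*r₁*r₂)
      have m3 := mul_le_mul_of_nonneg_left h3 (by positivity : (0:ℝ) ≤ 2*r₁*r₃)
      rcases hstrict with hsu | hsv
      · have h1' : Real.cos ub < Real.cos (α*ub) := cos_lt_cos_shrink hsu hubmem.2 hα0 hα1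
        have m1' := mul_lt_mul_of_pos_left h1' (by positivity : (0:ℝ) < 2*r₁*r₂)
        simp only [phi3]
        linarith
      · have h2' : Real.cos vb < Real.cos (α*vb) := cos_lt_cos_shrink hsv hvbmem.2 hα0 hα1
        have m2' := mul_lt_mul_of_pos_left h2' (by positivity : (0:ℝ) < 2*r₂*r₃)
        simp only [phi3]
        linarith
    have hftx : f t x₀ = Real.sqrt (phi3 r₁ r₂ r₃ u v) := by
      rw [hfeq, hudef, hvdef]
    have hft'x : f t' x' = Real.sqrt (phi3 r₁ r₂ r₃ (α*ub) (α*vb)) := by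
      rw [hfeq, harg1, harg2]
    calc F t = Real.sqrt (phi3 r₁ r₂ r₃ u v) := by rw [hFx₀, hftx]
      _ ≤ Real.sqrt (phi3 r₁ r₂ r₃ ub vb) := Real.sqrt_le_sqrt c1
      _ < Real.sqrt (phi3 r₁ r₂ r₃ (α*ub) (α*vb)) := Real.sqrt_lt_sqrt (phi3_nonneg _ _ _ _ _) c2
      _ = f t' x' := hft'x.symm
      _ ≤ F t' := hle t' x'
  -- MINIMUM
  refine ⟨heven, hperF, hanti, ?_⟩
  intro t
  have hq : (0:ℝ) < π/((k:ℝ)+l) := by positivity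
  have hper2 : Function.Periodic F (2*π/((k:ℝ)+l)) := hperF
  set P := 2*π/((k:ℝ)+l) with hPdef
  have hP : 0 < P := by positivity
  set n := round (t / P) with hn
  set d := t - n*P with hd
  have hFd : F d = F t := hper2.sub_int_mul_eq n
  have hdle : |d| ≤ π/((k:ℝ)+l) := by
    have hrd := abs_sub_round (t / P)
    have h1 : |t / P - (n:ℝ)| * P ≤ (1/2) * P := mul_le_mul_of_nonneg_right hrd hP.le
    have h2 : (t / P - (n:ℝ)) * P = d := by rw [hd]; field_simp
    have h3 : |d| = |t / P - (n:ℝ)| * P := by rw [← h2, abs_mul, abs_of_pos hP]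
    rw [h3]
    rw [hPdef] at h1 ⊢
    calc |t / P - (n:ℝ)| * (2*π/((k:ℝ)+l)) ≤ (1/2) * (2*π/((k:ℝ)+l)) := h1
      _ = π/((k:ℝ)+l) := by ring
  have hFabs : F |d| = F d := by
    rcases le_or_gt 0 d with h0 | h0
    · rw [abs_of_nonneg h0]
    · rw [abs_of_neg h0, heven]
  have habsmem : |d| ∈ Set.Icc 0 (π/((k:ℝ)+l)) := ⟨abs_nonneg _, hdle⟩
  have hqmem : π/((k:ℝ)+l) ∈ Set.Icc 0 (π/((k:ℝ)+l)) := ⟨hq.le, le_refl _⟩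
  have : F (π/((k:ℝ)+l)) ≤ F |d| := by
    rcases eq_or_lt_of_le hdle with heq | hlt'
    · rw [heq]
    · exact (hanti habsmem hqmem hlt').le
  calc F (π/((k:ℝ)+l)) ≤ F |d| := this
    _ = F d := hFabs
    _ = F t := hFd
end
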